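/- arXiv:2409.06479 — 7 statements merged into one kernel-verified Lean document; each statement's English description precedes it below -/
import Mathlib

section
/- Let H_C be self-adjoint on a finite-dimensional Hilbert space with simple eigenvalues in (2π/t_max)·(ℤ + φ₀/(2π)), with clock states |φ⟩ as above. Define the n-th moment operator φ_C^{(n)} = (1/t_max)·∫₀^{t_max} φⁿ |φ⟩⟨φ| dφ. Then for every n ≥ 1: [φ_C^{(n)}, H_C] = i·n·φ_C^{(n-1)} − i·t_max^{n-1}·|0⟩⟨0|, where |0⟩ is the clock state at φ = 0. In particular [φ_C^{(0)}, H_C] = 0. -/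
open Real

/-- The rank-one operator `|u⟩⟨u|`. -/
noncomputable def ketbra {d : ℕ} (u : EuclideanSpace ℂ (Fin d)) :
    EuclideanSpace ℂ (Fin d) →L[ℂ] EuclideanSpace ℂ (Fin d) :=
  (innerSL ℂ u).smulRight u

/-- The covariant clock state `|φ⟩ = Σ_j e^{i g(ε_j)} e^{-i ε_j φ} |ε_j⟩`. -/
noncomputable def clockState {d : ℕ} (b : Fin d → EuclideanSpace ℂ (Fin d))
    (ε g : Fin d → ℝ) (φ : ℝ) : EuclideanSpace ℂ (Fin d) :=
  ∑ j, (Complex.exp (Complex.I * (g j : ℂ)) * Complex.exp (-Complex.I * (ε j : ℂ) * (φ : ℂ))) • b j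

/-- The `n`-th moment operator `φ_C^{(n)} = (1/t_max)·∫₀^{t_max} φⁿ |φ⟩⟨φ| dφ` of the
covariant clock POVM. -/
noncomputable def momentOp {d : ℕ} (b : Fin d → EuclideanSpace ℂ (Fin d))
    (ε g : Fin d → ℝ) (tmax : ℝ) (n : ℕ) :
    EuclideanSpace ℂ (Fin d) →L[ℂ] EuclideanSpace ℂ (Fin d) :=
  (1 / (tmax : ℂ)) • ∫ φ in (0:ℝ)..tmax, ((φ : ℂ) ^ n) • ketbra (clockState b ε g φ)

namespace Stmt6Aux

open Complex intervalIntegral MeasureTheory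

/-- coefficient of clock state -/
noncomputable def cc (e gg φ : ℝ) : ℂ :=
  Complex.exp (Complex.I * gg) * Complex.exp (-Complex.I * e * φ)

lemma inner_clockState {d : ℕ} (b : OrthonormalBasis (Fin d) ℂ (EuclideanSpace ℂ (Fin d)))
    (ε g : Fin d → ℝ) (φ : ℝ) (j : Fin d) :
    inner ℂ (b j) (clockState (⇑b) ε g φ) = cc (ε j) (g j) φ := by
  have hb := orthonormal_iff_ite.mp b.orthonormal
  simp [clockState, inner_sum, inner_smul_right, hb, cc, mul_ite, Finset.sum_ite_eq]

lemma ketbra_entry {d : ℕ} (u x y : EuclideanSpace ℂ (Fin d)) :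
    inner ℂ x (ketbra u y) = (inner ℂ u y : ℂ) * inner ℂ x u := by
  simp [ketbra, inner_smul_right]

lemma cc_mul (ej gj ek gk φ : ℝ) :
    (starRingEnd ℂ) (cc ek gk φ) * cc ej gj φ
      = Complex.exp (Complex.I * ((gj : ℂ) - gk)) *
        Complex.exp (Complex.I * ((ek : ℂ) - ej) * φ) := by
  unfold cc
  rw [map_mul, ← Complex.exp_conj, ← Complex.exp_conj, ← Complex.exp_add, ← Complex.exp_add,
    ← Complex.exp_add, ← Complex.exp_add]
  congr 1
  simp only [map_mul, Complex.conj_I, Complex.conj_ofReal, map_neg]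
  ring

lemma entry_clock {d : ℕ} (b : OrthonormalBasis (Fin d) ℂ (EuclideanSpace ℂ (Fin d)))
    (ε g : Fin d → ℝ) (φ : ℝ) (j k : Fin d) :
    inner ℂ (b j) (ketbra (clockState (⇑b) ε g φ) (b k))
      = Complex.exp (Complex.I * ((g j : ℂ) - g k)) *
        Complex.exp (Complex.I * ((ε k : ℂ) - ε j) * φ) := by
  rw [ketbra_entry, ← inner_conj_symm (𝕜 := ℂ), inner_clockState, inner_clockState, cc_mul]

lemma cont_ketbra {d : ℕ} (b : Fin d → EuclideanSpace ℂ (Fin d)) (ε g : Fin d → ℝ) :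
    Continuous fun φ : ℝ => ketbra (clockState b ε g φ) := by
  have h1 : Continuous fun φ : ℝ => clockState b ε g φ := by
    unfold clockState
    exact continuous_finset_sum _ fun j _ => Continuous.smul (f := fun φ : ℝ => Complex.exp (Complex.I * (g j : ℂ)) * Complex.exp (-Complex.I * (ε j : ℂ) * (φ : ℂ))) (by fun_prop) continuous_const
  have h2 : Continuous fun u : EuclideanSpace ℂ (Fin d) => ketbra u := by
    have := (((ContinuousLinearMap.smulRightL ℂ (EuclideanSpace ℂ (Fin d))
      (EuclideanSpace ℂ (Fin d))).continuous.comp (innerSL ℂ (E := EuclideanSpace ℂ (Fin d))).continuous).clm_apply continuous_id)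
    simpa [ketbra] using this
  exact h2.comp h1

lemma integrable_moment {d : ℕ} (b : Fin d → EuclideanSpace ℂ (Fin d)) (ε g : Fin d → ℝ)
    (T : ℝ) (n : ℕ) :
    IntervalIntegrable (fun φ : ℝ => ((φ : ℂ) ^ n) • ketbra (clockState b ε g φ))
      volume 0 T :=
  (Continuous.smul (f := fun φ : ℝ => (φ : ℂ) ^ n) (by fun_prop) (cont_ketbra b ε g)).intervalIntegrable 0 T

lemma momentOp_entry {d : ℕ} (b : OrthonormalBasis (Fin d) ℂ (EuclideanSpace ℂ (Fin d)))
    (ε g : Fin d → ℝ) (T : ℝ) (n : ℕ) (j k : Fin d) :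
    inner ℂ (b j) (momentOp (⇑b) ε g T n (b k))
      = (1 / (T : ℂ)) * (Complex.exp (Complex.I * ((g j : ℂ) - g k)) *
          ∫ φ in (0:ℝ)..T, (φ : ℂ) ^ n * Complex.exp (Complex.I * ((ε k : ℂ) - ε j) * φ)) := by
  set L : (EuclideanSpace ℂ (Fin d) →L[ℂ] EuclideanSpace ℂ (Fin d)) →L[ℂ] ℂ :=
    (innerSL ℂ (b j)).comp (ContinuousLinearMap.apply ℂ (EuclideanSpace ℂ (Fin d)) (b k)) with hL
  have hLdef : ∀ A : EuclideanSpace ℂ (Fin d) →L[ℂ] EuclideanSpace ℂ (Fin d),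
      L A = inner ℂ (b j) (A (b k)) := fun A => rfl
  rw [momentOp, ContinuousLinearMap.smul_apply, inner_smul_right]
  congr 1
  rw [← hLdef, ← L.intervalIntegral_comp_comm (integrable_moment (⇑b) ε g T n)]
  have : ∀ φ : ℝ, L (((φ : ℂ) ^ n) • ketbra (clockState (⇑b) ε g φ))
      = Complex.exp (Complex.I * ((g j : ℂ) - g k)) *
        ((φ : ℂ) ^ n * Complex.exp (Complex.I * ((ε k : ℂ) - ε j) * φ)) := by
    intro φ
    rw [hLdef, ContinuousLinearMap.smul_apply, inner_smul_right, entry_clock]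
    ring
  rw [intervalIntegral.integral_congr (fun φ _ => this φ), intervalIntegral.integral_const_mul]

lemma key (a T : ℝ) (n : ℕ) :
    (n : ℂ) * (∫ φ in (0:ℝ)..T, (φ : ℂ) ^ (n - 1) * Complex.exp (Complex.I * a * φ))
      + Complex.I * a * (∫ φ in (0:ℝ)..T, (φ : ℂ) ^ n * Complex.exp (Complex.I * a * φ))
    = (T : ℂ) ^ n * Complex.exp (Complex.I * a * T) - (0 : ℂ) ^ n := by
  have hK : ∀ m : ℕ, IntervalIntegrable
      (fun φ : ℝ => (φ : ℂ) ^ m * Complex.exp (Complex.I * a * φ)) volume 0 T := by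
    intro m; apply Continuous.intervalIntegrable; fun_prop
  have hderiv : ∀ φ : ℝ, HasDerivAt (fun φ : ℝ => (φ : ℂ) ^ n * Complex.exp (Complex.I * a * φ))
      ((n : ℂ) * (φ : ℂ) ^ (n - 1) * Complex.exp (Complex.I * a * φ)
        + Complex.I * a * ((φ : ℂ) ^ n * Complex.exp (Complex.I * a * φ))) φ := by
    intro φ
    have h2 : HasDerivAt (fun z : ℂ => Complex.exp (Complex.I * a * z))
        (Complex.exp (Complex.I * a * (φ:ℂ)) * (Complex.I * a)) (φ : ℂ) := by
      simpa using (((hasDerivAt_id ((φ:ℝ) : ℂ)).const_mul (Complex.I * a)).cexp)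
    have h1 := (hasDerivAt_pow n ((φ:ℝ) : ℂ)).mul h2
    have h3 : HasDerivAt (fun z : ℂ => z ^ n * Complex.exp (Complex.I * a * z))
        ((n : ℂ) * (φ : ℂ) ^ (n - 1) * Complex.exp (Complex.I * a * (φ:ℂ))
          + Complex.I * a * ((φ : ℂ) ^ n * Complex.exp (Complex.I * a * (φ:ℂ)))) (φ : ℂ) := by
      exact h1.congr_deriv (by ring)
    exact h3.comp_ofReal
  have hint : IntervalIntegrable (fun φ : ℝ =>
      (n : ℂ) * (φ : ℂ) ^ (n - 1) * Complex.exp (Complex.I * a * φ)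
        + Complex.I * a * ((φ : ℂ) ^ n * Complex.exp (Complex.I * a * φ))) volume 0 T := by
    apply Continuous.intervalIntegrable; fun_prop
  have hstep := intervalIntegral.integral_eq_sub_of_hasDerivAt (fun φ _ => hderiv φ) hint
  have hK' : ∀ m : ℕ, IntervalIntegrable
      (fun φ : ℝ => (φ : ℂ) ^ m * Complex.exp (Complex.I * ((a:ℂ) * φ))) volume 0 T := by
    intro m; apply Continuous.intervalIntegrable; fun_prop
  simp only [mul_assoc] at hstep ⊢
  rw [intervalIntegral.integral_add ((hK' (n-1)).const_mul _) (((hK' n).const_mul _).const_mul _),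
      intervalIntegral.integral_const_mul, intervalIntegral.integral_const_mul,
      intervalIntegral.integral_const_mul] at hstep
  simpa using hstep

end Stmt6Aux
namespace Stmt6Aux

lemma op_ext {d : ℕ} (b : OrthonormalBasis (Fin d) ℂ (EuclideanSpace ℂ (Fin d)))
    {A B : EuclideanSpace ℂ (Fin d) →L[ℂ] EuclideanSpace ℂ (Fin d)}
    (h : ∀ j k, (inner ℂ (b j) (A (b k)) : ℂ) = inner ℂ (b j) (B (b k))) : A = B := by
  apply ContinuousLinearMap.coe_injective
  apply b.toBasis.ext
  intro k
  apply b.repr.injective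
  ext j
  simpa [OrthonormalBasis.repr_apply_apply] using h j k

end Stmt6Aux

open Stmt6Aux in
/-- Lemma 3 of the paper: the moment operators of a covariant periodic clock POVM satisfy
`[φ_C^{(n)}, H_C] = i·n·φ_C^{(n-1)} − i·t_max^{n-1}·|0⟩⟨0|` for `n ≥ 1`, and
`[φ_C^{(0)}, H_C] = 0`. -/
theorem stmt_6 (d : ℕ) (tmax : ℝ) (ht : 0 < tmax) (φ0 : ℝ)
    (hφ0 : φ0 ∈ Set.Ico 0 (2 * π))
    (H : EuclideanSpace ℂ (Fin d) →L[ℂ] EuclideanSpace ℂ (Fin d))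
    (hH : IsSelfAdjoint H)
    (b : OrthonormalBasis (Fin d) ℂ (EuclideanSpace ℂ (Fin d)))
    (ε : Fin d → ℝ) (hsimple : Function.Injective ε)
    (heig : ∀ j, H (b j) = (ε j : ℂ) • b j)
    (hlat : ∀ j, ∃ n : ℤ, ε j = (2 * π / tmax) * ((n : ℝ) + φ0 / (2 * π)))
    (g : Fin d → ℝ) :
    (∀ n : ℕ, 1 ≤ n →
      momentOp (⇑b) ε g tmax n * H - H * momentOp (⇑b) ε g tmax n =
        (Complex.I * (n : ℂ)) • momentOp (⇑b) ε g tmax (n - 1) -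
          (Complex.I * (tmax : ℂ) ^ (n - 1)) • ketbra (clockState (⇑b) ε g 0)) ∧
    momentOp (⇑b) ε g tmax 0 * H - H * momentOp (⇑b) ε g tmax 0 = 0 := by
  have hT0 : (tmax : ℂ) ≠ 0 := by exact_mod_cast ht.ne'
  have hper : ∀ j k : Fin d, Complex.exp (Complex.I * ((ε k : ℂ) - ε j) * tmax) = 1 := by
    intro j k
    obtain ⟨m, hm⟩ := hlat j
    obtain ⟨m', hm'⟩ := hlat k
    have hpi : (π : ℝ) ≠ 0 := Real.pi_ne_zero
    have hr : (ε k - ε j) * tmax = 2 * π * ((m' - m : ℤ) : ℝ) := by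
      rw [hm, hm']; field_simp; push_cast; ring
    calc Complex.exp (Complex.I * ((ε k : ℂ) - ε j) * tmax)
        = Complex.exp (((m' - m : ℤ) : ℂ) * (2 * (π:ℂ) * Complex.I)) := by
          congr 1
          have h2 : (((ε k - ε j) * tmax : ℝ) : ℂ) = ((2 * π * ((m' - m : ℤ) : ℝ) : ℝ) : ℂ) := by
            exact_mod_cast congrArg Complex.ofReal hr
          push_cast at h2 ⊢
          linear_combination Complex.I * h2
      _ = 1 := Complex.exp_int_mul_two_pi_mul_I _
  have hcomm : ∀ (A : EuclideanSpace ℂ (Fin d) →L[ℂ] EuclideanSpace ℂ (Fin d)) (j k : Fin d),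
      (inner ℂ (b j) ((A * H - H * A) (b k)) : ℂ)
        = ((ε k : ℂ) - ε j) * inner ℂ (b j) (A (b k)) := by
    intro A j k
    have hHx : ∀ x, (inner ℂ (b j) (H x) : ℂ) = (ε j : ℂ) * inner ℂ (b j) x := by
      intro x
      have h1 : (inner ℂ (ContinuousLinearMap.adjoint H (b j)) x : ℂ) = inner ℂ (b j) (H x) :=
        ContinuousLinearMap.adjoint_inner_left H x (b j)
      rw [← h1, ← ContinuousLinearMap.star_eq_adjoint, hH.star_eq, heig, inner_smul_left,
        Complex.conj_ofReal]
    rw [ContinuousLinearMap.sub_apply, inner_sub_right, ContinuousLinearMap.mul_apply,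
      ContinuousLinearMap.mul_apply, heig, map_smul, inner_smul_right, hHx]
    ring
  constructor
  · intro n hn
    obtain ⟨m, rfl⟩ : ∃ m, n = m + 1 := ⟨n - 1, (Nat.succ_pred_eq_of_pos hn).symm⟩
    simp only [Nat.add_sub_cancel]
    apply op_ext b
    intro j k
    have hkey := key (ε k - ε j) tmax (m + 1)
    have hcast : (((ε k - ε j : ℝ)) : ℂ) = (ε k : ℂ) - ε j := by push_cast; ring
    rw [hcast] at hkey
    rw [hper j k] at hkey
    simp only [Nat.add_sub_cancel, mul_one, zero_pow (Nat.succ_ne_zero m)] at hkey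
    set K1 := ∫ φ in (0:ℝ)..tmax, (φ : ℂ) ^ (m+1) * Complex.exp (Complex.I * ((ε k : ℂ) - ε j) * φ) with hK1
    set K0 := ∫ φ in (0:ℝ)..tmax, (φ : ℂ) ^ m * Complex.exp (Complex.I * ((ε k : ℂ) - ε j) * φ) with hK0
    have hkey2 : ((ε k : ℂ) - ε j) * K1
        = Complex.I * ((m+1 : ℕ) : ℂ) * K0 - Complex.I * (tmax : ℂ) ^ (m+1) := by
      linear_combination (-Complex.I) * hkey + (((ε k : ℂ) - ε j) * K1) * Complex.I_sq
    have hTinv : (1 / (tmax:ℂ)) * (tmax:ℂ) ^ (m+1) = (tmax:ℂ) ^ m := by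
      field_simp [pow_succ]
      ring
    rw [hcomm, momentOp_entry]
    rw [ContinuousLinearMap.sub_apply, inner_sub_right, ContinuousLinearMap.smul_apply,
      ContinuousLinearMap.smul_apply, inner_smul_right, inner_smul_right, momentOp_entry,
      entry_clock]
    simp only [Complex.ofReal_zero, mul_zero, Complex.exp_zero, mul_one, ← hK0, ← hK1]
    linear_combination (1 / (tmax:ℂ)) * Complex.exp (Complex.I * ((g j : ℂ) - g k)) * hkey2
      + (-Complex.I * Complex.exp (Complex.I * ((g j : ℂ) - g k))) * hTinv
  · apply op_ext b
    intro j k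
    have hkey := key (ε k - ε j) tmax 0
    have hcast : (((ε k - ε j : ℝ)) : ℂ) = (ε k : ℂ) - ε j := by push_cast; ring
    rw [hcast] at hkey
    rw [hper j k] at hkey
    simp only [pow_zero, one_mul, Nat.cast_zero, zero_mul, zero_add, mul_one] at hkey
    set K0 := ∫ φ in (0:ℝ)..tmax, Complex.exp (Complex.I * ((ε k : ℂ) - ε j) * φ) with hK0
    have hkey2 : ((ε k : ℂ) - ε j) * K0 = 0 := by
      linear_combination (-Complex.I) * hkey + (((ε k : ℂ) - ε j) * K0) * Complex.I_sq
    rw [hcomm, momentOp_entry]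
    simp only [ContinuousLinearMap.zero_apply, inner_zero_right, pow_zero, one_mul, ← hK0]
    linear_combination (1 / (tmax:ℂ)) * Complex.exp (Complex.I * ((g j : ℂ) - g k)) * hkey2
end

section
/- Let H_C and H_S be self-adjoint operators on finite-dimensional Hilbert spaces ℋ_C, ℋ_S, with H_C having simple spectrum, and suppose that for every pair of zero-eigenvalue solutions (ε_j, E) and (ε_k, E') of ε + E = 0 with ε ∈ spec(H_C), E ∈ spec(H_S), the difference E' − E lies in (2π/t_max)·ℤ. If there do not exist two eigenvalues of H_S differing by an integer multiple of 2π/t_max, then the kernel of C_H = H_C ⊗ I + I ⊗ H_S has dimension at most the maximal degeneracy of a single eigenvalue of H_S; in particular, if H_S also has simple spectrum, dim ker(C_H) ≤ 1. -/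
open Real

/-- Triviality criterion for the physical Hilbert space (Eq. eEnergyDiffCond of the paper):
if every pair of zero-eigenvalue solutions `(ε, E)`, `(ε', E')` of `ε + E = 0` has
`E' − E ∈ (2π/t_max)·ℤ`, and no two eigenvalues of `H_S` differ by an integer multiple of
`2π/t_max`, then the kernel of `C_H = H_C ⊗ I + I ⊗ H_S` has dimension at most the maximal
degeneracy of an eigenvalue of `H_S`; in particular for `H_S` with simple spectrum it is at
most one-dimensional. -/
theorem stmt_9 (dC dS : ℕ) (tmax : ℝ) (ht : 0 < tmax)
    (HC : EuclideanSpace ℂ (Fin dC) →ₗ[ℂ] EuclideanSpace ℂ (Fin dC))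
    (HS : EuclideanSpace ℂ (Fin dS) →ₗ[ℂ] EuclideanSpace ℂ (Fin dS))
    (hHC : LinearMap.IsSymmetric HC) (hHS : LinearMap.IsSymmetric HS)
    (hsimpleC : ∀ μ : ℂ, Module.finrank ℂ (Module.End.eigenspace HC μ) ≤ 1)
    (hcomm : ∀ εj E εk E' : ℂ,
      Module.End.HasEigenvalue HC εj → Module.End.HasEigenvalue HS E → εj + E = 0 →
      Module.End.HasEigenvalue HC εk → Module.End.HasEigenvalue HS E' → εk + E' = 0 →
      ∃ k : ℤ, E' - E = ((2 * π / tmax : ℝ) : ℂ) * (k : ℂ))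
    (hnodiff : ∀ E E' : ℂ,
      Module.End.HasEigenvalue HS E → Module.End.HasEigenvalue HS E' →
      (∃ k : ℤ, E' - E = ((2 * π / tmax : ℝ) : ℂ) * (k : ℂ)) → E = E') :
    (Module.finrank ℂ (LinearMap.ker
        (TensorProduct.map HC LinearMap.id + TensorProduct.map LinearMap.id HS)) ≤
      ⨆ μ : ℂ, Module.finrank ℂ (Module.End.eigenspace HS μ)) ∧
    ((∀ μ : ℂ, Module.finrank ℂ (Module.End.eigenspace HS μ) ≤ 1) →
      Module.finrank ℂ (LinearMap.ker
        (TensorProduct.map HC LinearMap.id + TensorProduct.map LinearMap.id HS)) ≤ 1) := by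
  classical
  set CH := TensorProduct.map HC LinearMap.id + TensorProduct.map LinearMap.id HS with hCH
  -- boundedness of the sup
  have hbdd : BddAbove (Set.range fun μ : ℂ => Module.finrank ℂ (Module.End.eigenspace HS μ)) := by
    refine ⟨Module.finrank ℂ (EuclideanSpace ℂ (Fin dS)), ?_⟩
    rintro n ⟨μ, rfl⟩
    exact Submodule.finrank_le _
  have hdC : Module.finrank ℂ (EuclideanSpace ℂ (Fin dC)) = dC := finrank_euclideanSpace_fin
  set bC := hHC.eigenvectorBasis hdC with hbC
  set ε := hHC.eigenvalues hdC with hε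
  set b := bC.toBasis with hb
  set bS := (EuclideanSpace.basisFun (Fin dS) ℂ).toBasis with hbS
  -- the coordinate maps
  set φ : Fin dC → (TensorProduct ℂ (EuclideanSpace ℂ (Fin dC)) (EuclideanSpace ℂ (Fin dS))
      →ₗ[ℂ] EuclideanSpace ℂ (Fin dS)) :=
    fun i => (TensorProduct.lid ℂ _).toLinearMap ∘ₗ LinearMap.rTensor _ (b.coord i) with hφ
  have hφ_tmul : ∀ i u v, φ i (u ⊗ₜ[ℂ] v) = b.repr u i • v := by
    intro i u v
    simp [hφ, Module.Basis.coord_apply]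
  -- coordinates of HC
  have hcoordHC : ∀ (u : EuclideanSpace ℂ (Fin dC)) i,
      b.repr (HC u) i = (ε i : ℂ) * b.repr u i := by
    intro u i
    have := hHC.eigenvectorBasis_apply_self_apply hdC u i
    simpa [hb, OrthonormalBasis.coe_toBasis_repr_apply] using this
  -- commutation relation
  have hcommute : ∀ i x, φ i (CH x) = HS (φ i x) + (ε i : ℂ) • φ i x := by
    intro i x
    have : (φ i) ∘ₗ CH = HS ∘ₗ (φ i) + (ε i : ℂ) • (φ i) := by
      apply TensorProduct.ext'
      intro u v
      simp only [LinearMap.comp_apply, hCH, LinearMap.add_apply, TensorProduct.map_tmul,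
        LinearMap.id_apply, LinearMap.smul_apply, map_add, hφ_tmul, hcoordHC,
        LinearMap.map_smul]
      rw [smul_smul, mul_comm]
      abel
    have := congrArg (fun f => f x) this
    simpa using this
  -- kernel elements map into eigenspaces
  have hker_eig : ∀ i x, x ∈ LinearMap.ker CH →
      φ i x ∈ Module.End.eigenspace HS (-(ε i : ℂ)) := by
    intro i x hx
    rw [Module.End.mem_eigenspace_iff]
    have h0 : φ i (CH x) = 0 := by rw [LinearMap.mem_ker.mp hx, map_zero]
    have := hcommute i x
    rw [h0] at this
    have h2 : HS (φ i x) = -((ε i : ℂ) • φ i x) := eq_neg_of_add_eq_zero_left this.symm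
    simpa [neg_smul] using h2
  -- the b i are eigenvectors of HC
  have hBi : ∀ i, Module.End.HasEigenvector HC (ε i : ℂ) (b i) := by
    intro i
    simpa [hb] using hHC.hasEigenvector_eigenvectorBasis hdC i
  -- uniqueness of the index
  have hmain : ∀ i j (x y : TensorProduct ℂ (EuclideanSpace ℂ (Fin dC)) (EuclideanSpace ℂ (Fin dS))),
      x ∈ LinearMap.ker CH → y ∈ LinearMap.ker CH → φ i x ≠ 0 → φ j y ≠ 0 → i = j := by
    intro i j x y hx hy hix hjy
    have hEi : Module.End.HasEigenvalue HS (-(ε i : ℂ)) :=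
      Module.End.hasEigenvalue_of_hasEigenvector ⟨hker_eig i x hx, hix⟩
    have hEj : Module.End.HasEigenvalue HS (-(ε j : ℂ)) :=
      Module.End.hasEigenvalue_of_hasEigenvector ⟨hker_eig j y hy, hjy⟩
    have hCi : Module.End.HasEigenvalue HC (ε i : ℂ) :=
      Module.End.hasEigenvalue_of_hasEigenvector (hBi i)
    have hCj : Module.End.HasEigenvalue HC (ε j : ℂ) :=
      Module.End.hasEigenvalue_of_hasEigenvector (hBi j)
    have hsum_i : (ε i : ℂ) + (-(ε i : ℂ)) = 0 := by ring
    have hsum_j : (ε j : ℂ) + (-(ε j : ℂ)) = 0 := by ring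
    have hdiff := hcomm (ε i : ℂ) (-(ε i : ℂ)) (ε j : ℂ) (-(ε j : ℂ)) hCi hEi hsum_i hCj hEj hsum_j
    have heq : (-(ε i : ℂ)) = (-(ε j : ℂ)) := hnodiff _ _ hEi hEj hdiff
    have hee : (ε i : ℂ) = (ε j : ℂ) := neg_injective heq
    by_contra hij
    -- b i and b j are two independent vectors in eigenspace HC (ε i)
    set S := Module.End.eigenspace HC (ε i : ℂ) with hS
    have hmi : b i ∈ S := (hBi i).1
    have hmj : b j ∈ S := by rw [hS, hee]; exact (hBi j).1
    set f : Fin 2 → S := ![⟨b i, hmi⟩, ⟨b j, hmj⟩] with hf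
    have hg : Function.Injective (![i, j] : Fin 2 → Fin dC) := by
      intro a c hac
      fin_cases a <;> fin_cases c <;>
        simp only [Matrix.cons_val_zero, Matrix.cons_val_one, Matrix.head_cons] at hac <;>
        first | rfl | exact absurd hac hij | exact absurd hac.symm hij
    have hli2 : LinearIndependent ℂ ((b : Fin dC → _) ∘ ![i, j]) :=
      b.linearIndependent.comp _ hg
    have hlif : LinearIndependent ℂ f := by
      apply LinearIndependent.of_comp S.subtype
      convert hli2 using 1
      funext a
      fin_cases a <;> rfl
      rfl
    have h2 := hlif.fintype_card_le_finrank
    rw [hS] at h2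
    simp only [Fintype.card_fin] at h2
    have h1 := hsimpleC (ε i : ℂ)
    omega
  -- injectivity: if all coordinates vanish the vector is zero
  have hinj : ∀ x : TensorProduct ℂ (EuclideanSpace ℂ (Fin dC)) (EuclideanSpace ℂ (Fin dS)),
      (∀ i, φ i x = 0) → x = 0 := by
    intro x hx
    set T := b.tensorProduct bS with hT
    have hψ : ∀ i j, T.coord (i, j) = bS.coord j ∘ₗ φ i := by
      intro i j
      apply T.ext
      rintro ⟨k, l⟩
      simp only [hT, Module.Basis.tensorProduct_apply, LinearMap.comp_apply, hφ_tmul,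
        Module.Basis.coord_apply, Module.Basis.repr_self, map_smul, smul_eq_mul, Finsupp.single_apply,
        Prod.mk.injEq]
      by_cases hik : i = k <;> by_cases hjl : j = l <;>
        simp [hik, hjl, Finsupp.single_apply, eq_comm]
    have hrepr : T.repr x = 0 := by
      ext p
      obtain ⟨i, j⟩ := p
      have := congrArg (fun f => f x) (hψ i j)
      simp only [Module.Basis.coord_apply, LinearMap.comp_apply] at this
      rw [this, hx i]
      simp
    have := congrArg T.repr.symm hrepr
    simpa using this
  have hkey : LinearMap.ker CH ≠ ⊥ → ∃ μ : ℂ,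
      Module.finrank ℂ (LinearMap.ker CH) ≤ Module.finrank ℂ (Module.End.eigenspace HS μ) := by
    intro hker
    obtain ⟨x, hxmem, hxne⟩ := Submodule.exists_mem_ne_zero_of_ne_bot hker
    obtain ⟨i0, hi0⟩ : ∃ i, φ i x ≠ 0 := by
      by_contra h
      push_neg at h
      exact hxne (hinj x h)
    refine ⟨-(ε i0 : ℂ), ?_⟩
    set F : LinearMap.ker CH →ₗ[ℂ] Module.End.eigenspace HS (-(ε i0 : ℂ)) :=
      LinearMap.codRestrict _ ((φ i0) ∘ₗ (LinearMap.ker CH).subtype)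
        (fun y => hker_eig i0 y y.2) with hF
    have hFinj : Function.Injective F := by
      rw [← LinearMap.ker_eq_bot, Submodule.eq_bot_iff]
      rintro ⟨y, hy⟩ hFy
      have h0 : φ i0 y = 0 := by
        have := congrArg Subtype.val hFy
        exact this
      have hall : ∀ i, φ i y = 0 := by
        intro i
        by_contra hne
        have hii : i = i0 := hmain i i0 y x hy hxmem hne hi0
        exact hne (by rw [hii]; exact h0)
      exact Subtype.ext (hinj y hall)
    exact LinearMap.finrank_le_finrank_of_injective hFinj
  constructor
  · by_cases hker : LinearMap.ker CH = ⊥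
    · rw [hker]; simp
    · obtain ⟨μ, hμ⟩ := hkey hker
      exact hμ.trans (le_ciSup hbdd μ)
  · intro hsimpleS
    by_cases hker : LinearMap.ker CH = ⊥
    · rw [hker]; simp
    · obtain ⟨μ, hμ⟩ := hkey hker
      exact hμ.trans (hsimpleS μ)
end

section
/- Let f_S, H_S be smooth functions on a symplectic manifold with f_S analytic along the flow of H_S, let φ_max > 0, and suppose the relational observable F(τ) := Σ_{n≥0} (τ − φ_C)ⁿ/n! · {f_S, H_S}_n satisfies the transient flow law α^s·F(τ) = F(τ + z·φ_max) for s in the z-th clock cycle. Then F(τ) is invariant along the entire flow (α^s·F(τ) = F(τ) for all s) if and only if F(τ + φ_max) = F(τ) for all τ, which holds in particular when f_S is φ_max-periodic along the flow of H_S, i.e. f_S ∘ α_{H_S}^{φ_max} = f_S. -/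
/-- Corollary 1 of the paper: let `F(τ) = f_S ∘ α_{H_S}^{τ − φ_C}` be a relational observable
relative to a periodic clock of period `φ_max`, satisfying the transient flow law
`α^s·F(τ) = F(τ + z·φ_max)` for `s` in the `z`-th clock cycle. Then `F(τ)` is invariant along
the entire constraint flow iff `F(τ + φ_max) = F(τ)` for all `τ`, which holds in particular
when `f_S` is `φ_max`-periodic along the flow of `H_S`. -/
theorem stmt_13 {M : Type*} (φmax φ0 : ℝ) (hφmax : 0 < φmax) (hφ0 : φ0 ∈ Set.Ico 0 φmax)
    (αH : ℝ → M → M) (αS : ℝ → M → M) (fS : M → ℝ) (φC : M → ℝ)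
    (F : ℝ → M → ℝ)
    (hF : ∀ τ x, F τ x = fS (αS (τ - φC x) x))
    (htrans : ∀ z : ℤ, ∀ s ∈ Set.Ico ((z : ℝ) * φmax - φ0) (((z : ℝ) + 1) * φmax - φ0),
      ∀ τ x, F τ (αH s x) = F (τ + (z : ℝ) * φmax) x) :
    ((∀ s τ x, F τ (αH s x) = F τ x) ↔ (∀ τ x, F (τ + φmax) x = F τ x)) ∧
    ((∀ a b x, αS (a + b) x = αS a (αS b x)) → (∀ x, fS (αS φmax x) = fS x) →
      ∀ τ x, F (τ + φmax) x = F τ x) := by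
  constructor
  · constructor
    · intro hinv τ x
      have hs : (φmax - φ0) ∈ Set.Ico (((1:ℤ) : ℝ) * φmax - φ0) ((((1:ℤ) : ℝ) + 1) * φmax - φ0) := by
        constructor <;> push_cast <;> nlinarith [hφ0.1, hφ0.2]
      have := htrans 1 (φmax - φ0) hs τ x
      rw [hinv] at this
      push_cast at this
      rw [one_mul] at this
      exact this.symm
    · intro hper s τ x
      -- periodicity extends to all integer multiples
      have key : ∀ z : ℤ, ∀ τ x, F (τ + (z : ℝ) * φmax) x = F τ x := by
        intro z
        induction z using Int.induction_on with
        | zero => intro τ x; simp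
        | succ n ih =>
          intro τ x
          push_cast at ih ⊢
          have e : τ + ((n : ℝ) + 1) * φmax = (τ + (n : ℝ) * φmax) + φmax := by ring
          rw [e, hper, ih]
        | pred n ih =>
          intro τ x
          push_cast at ih ⊢
          have h1 := hper (τ + (-(n : ℝ) - 1) * φmax) x
          have e : τ + (-(n : ℝ) - 1) * φmax + φmax = τ + -(n : ℝ) * φmax := by ring
          rw [e] at h1
          exact h1.symm.trans (ih τ x)
      set z : ℤ := ⌊(s + φ0) / φmax⌋ with hz
      have h1 : (z : ℝ) ≤ (s + φ0) / φmax := Int.floor_le _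
      have h2 : (s + φ0) / φmax < (z : ℝ) + 1 := Int.lt_floor_add_one _
      have hs : s ∈ Set.Ico ((z : ℝ) * φmax - φ0) (((z : ℝ) + 1) * φmax - φ0) := by
        constructor
        · nlinarith [(le_div_iff₀ hφmax).mp h1]
        · nlinarith [(div_lt_iff₀ hφmax).mp h2]
      rw [htrans z s hs τ x, key z τ x]
  · intro hgrp hperS τ x
    rw [hF, hF]
    have e : τ + φmax - φC x = φmax + (τ - φC x) := by ring
    rw [e, hgrp, hperS]
end

section
/- Let H_C be as in the covariant-POVM setting (finite-dimensional, simple spectrum in (2π/t_max)(ℤ+φ₀/2π)), H_S self-adjoint on ℋ_S, U_S(t) = e^{-itH_S}, U_CS(t) = e^{-it(H_C⊗I + I⊗H_S)}, and for a bounded operator f_S on ℋ_S define F_{f_S,T}(τ) = (1/t_max)·∫₀^{t_max} |φ⟩⟨φ| ⊗ U_S(τ−φ)† f_S U_S(τ−φ) dφ. Then [F_{f_S,T}(τ), H_C⊗I + I⊗H_S] = −(i/t_max)·|0⟩⟨0| ⊗ U_S(τ)†·(U_S(t_max) f_S U_S(t_max)† − f_S)·U_S(τ). In particular, F_{f_S,T}(τ)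 commutes with the constraint if and only if f_S commutes with U_S(t_max). -/
open Real Matrix Kronecker NormedSpace

attribute [local instance] Matrix.frobeniusNormedAddCommGroup Matrix.frobeniusNormedSpace

/-- The covariant clock state `|φ⟩ = Σ_j e^{i g(ε_j)} e^{-i ε_j φ} |ε_j⟩` as a vector. -/
noncomputable def clockVec {dC : ℕ} (v : Fin dC → Fin dC → ℂ) (ε g : Fin dC → ℝ) (φ : ℝ) :
    Fin dC → ℂ :=
  fun i => ∑ j, Complex.exp (Complex.I * (g j : ℂ)) *
    Complex.exp (-Complex.I * (ε j : ℂ) * (φ : ℂ)) * v j i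

/-- The rank-one matrix `|u⟩⟨u|`. -/
noncomputable def ketbraM {dC : ℕ} (u : Fin dC → ℂ) : Matrix (Fin dC) (Fin dC) ℂ :=
  Matrix.vecMulVec u (star u)

/-- The system unitary `U_S(t) = exp(-i t H_S)`. -/
noncomputable def US {dS : ℕ} (HS : Matrix (Fin dS) (Fin dS) ℂ) (t : ℝ) :
    Matrix (Fin dS) (Fin dS) ℂ :=
  NormedSpace.exp ((-(t : ℂ) * Complex.I) • HS)

/-- The quantized relational observable
`F_{f_S,T}(τ) = (1/t_max)·∫₀^{t_max} |φ⟩⟨φ| ⊗ U_S(τ−φ)† f_S U_S(τ−φ) dφ`. -/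
noncomputable def relObs {dC dS : ℕ} (v : Fin dC → Fin dC → ℂ) (ε g : Fin dC → ℝ)
    (tmax : ℝ) (HS fS : Matrix (Fin dS) (Fin dS) ℂ) (τ : ℝ) :
    Matrix (Fin dC × Fin dS) (Fin dC × Fin dS) ℂ :=
  (tmax : ℂ)⁻¹ • ∫ φ in (0:ℝ)..tmax,
    (ketbraM (clockVec v ε g φ)) ⊗ₖ ((US HS (τ - φ))ᴴ * fS * US HS (τ - φ))

section Aux

attribute [local instance] Matrix.frobeniusNormedRing Matrix.frobeniusNormedAlgebra

variable {dC dS : ℕ}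

section US

variable (HS : Matrix (Fin dS) (Fin dS) ℂ)

lemma expS_mul (a b : ℂ) :
    exp (a • HS) * exp (b • HS) = exp ((a + b) • HS) := by
  rw [add_smul, Matrix.exp_add_of_commute]
  exact ((Commute.refl HS).smul_left a).smul_right b

lemma US_eq (t : ℝ) : US HS t = exp ((-(t:ℂ) * Complex.I) • HS) := rfl

lemma US_conjT (hHS : HS.IsHermitian) (t : ℝ) :
    (US HS t)ᴴ = exp (((t:ℂ) * Complex.I) • HS) := by
  rw [US_eq, ← Matrix.exp_conjTranspose, Matrix.conjTranspose_smul, hHS.eq]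
  congr 1
  simp [Complex.ext_iff]

lemma US_mul_conjT (hHS : HS.IsHermitian) (t : ℝ) : US HS t * (US HS t)ᴴ = 1 := by
  rw [US_conjT HS hHS, US_eq, expS_mul]
  simp [exp_zero]

lemma conjT_mul_US (hHS : HS.IsHermitian) (t : ℝ) : (US HS t)ᴴ * US HS t = 1 := by
  rw [US_conjT HS hHS, US_eq, expS_mul]
  simp [exp_zero]

lemma US_zero : US HS 0 = 1 := by
  simp [US_eq, exp_zero]

lemma hasDerivAt_ofReal' (φ : ℝ) : HasDerivAt (fun x : ℝ => (x : ℂ)) 1 φ := by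
  simpa using (hasDerivAt_id φ).ofReal_comp

lemma expS_hasDerivAt (c : ℝ → ℂ) (c' : ℂ) (φ : ℝ) (hc : HasDerivAt c c' φ) :
    HasDerivAt (fun x => exp (c x • HS)) (c' • (HS * exp (c φ • HS))) φ := by
  have h := hasDerivAt_exp_smul_const' (𝕂 := ℂ) HS (c φ)
  exact (h.scomp φ hc)

lemma hU (τ : ℝ) (φ : ℝ) :
    HasDerivAt (fun φ : ℝ => US HS (τ - φ))
      (Complex.I • (HS * US HS (τ - φ))) φ := by
  have hc : HasDerivAt (fun x : ℝ => -((τ : ℂ) - (x : ℂ)) * Complex.I) Complex.I φ := by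
    have := (((hasDerivAt_ofReal' φ).const_sub (τ : ℂ)).neg).mul_const Complex.I
    simpa using this
  have := expS_hasDerivAt HS _ _ φ hc
  simpa [US] using this

lemma hUd (hHS : HS.IsHermitian) (τ : ℝ) (φ : ℝ) :
    HasDerivAt (fun φ : ℝ => (US HS (τ - φ))ᴴ)
      ((-Complex.I) • (HS * (US HS (τ - φ))ᴴ)) φ := by
  have hc : HasDerivAt (fun x : ℝ => ((τ : ℂ) - (x : ℂ)) * Complex.I) (-Complex.I) φ := by
    have := ((hasDerivAt_ofReal' φ).const_sub (τ : ℂ)).mul_const Complex.I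
    simpa using this
  have h := expS_hasDerivAt HS _ _ φ hc
  have heq : ∀ x : ℝ, (US HS (τ - x))ᴴ = exp ((((τ:ℂ) - (x:ℂ)) * Complex.I) • HS) := by
    intro x
    rw [US_conjT HS hHS]
    push_cast
    ring_nf
  simp only [heq]
  exact h

lemma US_commute (t : ℝ) : HS * US HS t = US HS t * HS := by
  have : Commute HS ((-(t : ℂ) * Complex.I) • HS) := (Commute.refl HS).smul_right _
  exact (this.exp_right).eq

lemma hA (hHS : HS.IsHermitian) (fS : Matrix (Fin dS) (Fin dS) ℂ) (τ : ℝ) (φ : ℝ) :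
    HasDerivAt (fun φ : ℝ => (US HS (τ - φ))ᴴ * fS * US HS (τ - φ))
      ((-Complex.I) • (HS * ((US HS (τ - φ))ᴴ * fS * US HS (τ - φ))
        - ((US HS (τ - φ))ᴴ * fS * US HS (τ - φ)) * HS)) φ := by
  have h := ((hUd HS hHS τ φ).mul_const fS).mul (hU HS τ φ)
  refine h.congr_deriv ?_
  rw [smul_sub]
  simp only [smul_mul_assoc, mul_smul_comm, mul_assoc]
  rw [← US_commute]
  module

end US

section Clock

variable (v : Fin dC → Fin dC → ℂ) (ε g : Fin dC → ℝ)

noncomputable def sjl (j l : Fin dC) (φ : ℝ) : ℂ :=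
  Complex.exp (Complex.I * (g j : ℂ) - Complex.I * (g l : ℂ)) *
    Complex.exp (-Complex.I * ((ε j : ℂ) - (ε l : ℂ)) * (φ : ℂ))

lemma ketbra_expand (φ : ℝ) :
    ketbraM (clockVec v ε g φ) =
      ∑ j, ∑ l, sjl ε g j l φ • Matrix.vecMulVec (v j) (star (v l)) := by
  ext i k
  simp only [ketbraM, Matrix.vecMulVec_apply, clockVec, Matrix.sum_apply, Matrix.smul_apply,
    Pi.star_apply, smul_eq_mul, sjl]
  rw [star_sum, Finset.sum_mul_sum]
  refine Finset.sum_congr rfl fun j _ => Finset.sum_congr rfl fun l _ => ?_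
  have h1 : star (Complex.exp (Complex.I * (g l:ℂ))) = Complex.exp (-(Complex.I * (g l:ℂ))) := by
    rw [Complex.star_def, ← Complex.exp_conj]
    congr 1
    simp [Complex.conj_ofReal]
  have h2 : star (Complex.exp (-Complex.I * (ε l:ℂ) * (φ:ℂ))) =
      Complex.exp (Complex.I * (ε l:ℂ) * (φ:ℂ)) := by
    rw [Complex.star_def, ← Complex.exp_conj]
    congr 1
    simp [Complex.conj_ofReal]
  have h3 : Complex.exp (Complex.I * (g j:ℂ) - Complex.I * (g l:ℂ)) =
      Complex.exp (Complex.I * (g j:ℂ)) * Complex.exp (-(Complex.I * (g l:ℂ))) := by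
    rw [sub_eq_add_neg, Complex.exp_add]
  have h4 : Complex.exp (-Complex.I * ((ε j:ℂ) - (ε l:ℂ)) * (φ:ℂ)) =
      Complex.exp (-Complex.I * (ε j:ℂ) * (φ:ℂ)) *
        Complex.exp (Complex.I * (ε l:ℂ) * (φ:ℂ)) := by
    rw [← Complex.exp_add]
    congr 1
    ring
  rw [star_mul', star_mul', h1, h2, h3, h4]
  ring

lemma sjl_hasDerivAt (j l : Fin dC) (φ : ℝ) :
    HasDerivAt (sjl ε g j l)
      ((-Complex.I * ((ε j : ℂ) - (ε l : ℂ))) * sjl ε g j l φ) φ := by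
  have h := (((hasDerivAt_ofReal' φ).const_mul
      (-Complex.I * ((ε j : ℂ) - (ε l : ℂ)))).cexp).const_mul
      (Complex.exp (Complex.I * (g j : ℂ) - Complex.I * (g l : ℂ)))
  refine h.congr_deriv ?_
  simp only [sjl]
  ring

lemma mul_vecMulVec {N : ℕ} (A : Matrix (Fin N) (Fin N) ℂ) (u w : Fin N → ℂ) :
    A * Matrix.vecMulVec u w = Matrix.vecMulVec (A *ᵥ u) w := by
  ext i k
  simp [Matrix.mul_apply, Matrix.vecMulVec_apply, Matrix.mulVec, dotProduct,
    Finset.sum_mul, mul_assoc]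

lemma vecMulVec_smul_left {N : ℕ} (c : ℂ) (u w : Fin N → ℂ) :
    Matrix.vecMulVec (c • u) w = c • Matrix.vecMulVec u w := by
  ext i k
  simp [Matrix.vecMulVec_apply, mul_assoc]

variable (HC : Matrix (Fin dC) (Fin dC) ℂ)

lemma vecMulVec_mul (hHC : HC.IsHermitian) (heig : ∀ j, HC *ᵥ v j = (ε j : ℂ) • v j)
    (u : Fin dC → ℂ) (l : Fin dC) :
    Matrix.vecMulVec u (star (v l)) * HC = (ε l : ℂ) • Matrix.vecMulVec u (star (v l)) := by
  ext i k
  simp only [Matrix.mul_apply, Matrix.vecMulVec_apply, Matrix.smul_apply, Pi.star_apply,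
    smul_eq_mul]
  have hsym : ∀ m k, star (HC k m) = HC m k := by
    intro m k
    conv_rhs => rw [← hHC.eq]
    exact (Matrix.conjTranspose_apply _ _ _).symm
  have : ∑ m, u i * star (v l m) * HC m k = u i * star ((HC *ᵥ v l) k) := by
    simp only [Matrix.mulVec, dotProduct, star_sum, star_mul', Finset.mul_sum]
    refine Finset.sum_congr rfl fun m _ => ?_
    rw [← hsym m k]
    ring
  rw [this, heig l]
  simp only [Pi.smul_apply, smul_eq_mul, star_mul', Complex.star_def, Complex.conj_ofReal]
  ring

lemma hK (hHC : HC.IsHermitian) (heig : ∀ j, HC *ᵥ v j = (ε j : ℂ) • v j) (φ : ℝ) :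
    HasDerivAt (fun φ : ℝ => ketbraM (clockVec v ε g φ))
      ((-Complex.I) • (HC * ketbraM (clockVec v ε g φ)
        - ketbraM (clockVec v ε g φ) * HC)) φ := by
  simp only [ketbra_expand v ε g]
  have h : HasDerivAt (fun φ : ℝ => ∑ j, ∑ l, sjl ε g j l φ • Matrix.vecMulVec (v j) (star (v l)))
      (∑ j, ∑ l, ((-Complex.I * ((ε j : ℂ) - (ε l : ℂ))) * sjl ε g j l φ) •
        Matrix.vecMulVec (v j) (star (v l))) φ := by
    refine HasDerivAt.fun_sum (𝕜 := ℝ) (F := Matrix (Fin dC) (Fin dC) ℂ) fun j _ =>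
      HasDerivAt.fun_sum (𝕜 := ℝ) (F := Matrix (Fin dC) (Fin dC) ℂ) fun l _ => ?_
    exact (sjl_hasDerivAt ε g j l φ).smul_const _
  refine h.congr_deriv ?_
  simp only [Matrix.mul_sum, Matrix.sum_mul, Matrix.mul_smul, Matrix.smul_mul,
    _root_.mul_vecMulVec, heig, vecMulVec_mul v ε HC hHC heig, vecMulVec_smul_left,
    ← Finset.sum_sub_distrib, Finset.smul_sum]
  refine Finset.sum_congr rfl fun j _ => Finset.sum_congr rfl fun l _ => ?_
  module

end Clock

section Main

variable (v : Fin dC → Fin dC → ℂ) (ε g : Fin dC → ℝ)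
  (HC : Matrix (Fin dC) (Fin dC) ℂ) (HS fS : Matrix (Fin dS) (Fin dS) ℂ)

lemma kron_sub_right (A : Matrix (Fin dC) (Fin dC) ℂ) (X Y : Matrix (Fin dS) (Fin dS) ℂ) :
    A ⊗ₖ (X - Y) = A ⊗ₖ X - A ⊗ₖ Y := by
  ext ⟨i, a⟩ ⟨k, b⟩
  simp [Matrix.kroneckerMap_apply, mul_sub]

lemma kron_sub_left (X Y : Matrix (Fin dC) (Fin dC) ℂ) (A : Matrix (Fin dS) (Fin dS) ℂ) :
    (X - Y) ⊗ₖ A = X ⊗ₖ A - Y ⊗ₖ A := by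
  ext ⟨i, a⟩ ⟨k, b⟩
  simp [Matrix.kroneckerMap_apply, sub_mul]

/-- `X ↦ X ⊗ₖ 1` as a continuous linear map. -/
noncomputable def L1 (dC dS : ℕ) :
    Matrix (Fin dC) (Fin dC) ℂ →L[ℂ] Matrix (Fin dC × Fin dS) (Fin dC × Fin dS) ℂ :=
  LinearMap.toContinuousLinearMap
    { toFun := fun X => X ⊗ₖ (1 : Matrix (Fin dS) (Fin dS) ℂ)
      map_add' := fun X Y => Matrix.add_kronecker X Y 1
      map_smul' := fun c X => Matrix.smul_kronecker c X 1 }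

/-- `X ↦ 1 ⊗ₖ X` as a continuous linear map. -/
noncomputable def L2 (dC dS : ℕ) :
    Matrix (Fin dS) (Fin dS) ℂ →L[ℂ] Matrix (Fin dC × Fin dS) (Fin dC × Fin dS) ℂ :=
  LinearMap.toContinuousLinearMap
    { toFun := fun X => (1 : Matrix (Fin dC) (Fin dC) ℂ) ⊗ₖ X
      map_add' := fun X Y => Matrix.kronecker_add 1 X Y
      map_smul' := fun c X => Matrix.kronecker_smul c 1 X }

lemma L1_apply (X : Matrix (Fin dC) (Fin dC) ℂ) :
    L1 dC dS X = X ⊗ₖ (1 : Matrix (Fin dS) (Fin dS) ℂ) := by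
  simp [L1, LinearMap.coe_toContinuousLinearMap']

lemma L2_apply (X : Matrix (Fin dS) (Fin dS) ℂ) :
    L2 dC dS X = (1 : Matrix (Fin dC) (Fin dC) ℂ) ⊗ₖ X := by
  simp [L2, LinearMap.coe_toContinuousLinearMap']

lemma hG_deriv (hHC : HC.IsHermitian) (hHS : HS.IsHermitian)
    (heig : ∀ j, HC *ᵥ v j = (ε j : ℂ) • v j) (τ φ : ℝ) :
    HasDerivAt
      (fun φ : ℝ => ketbraM (clockVec v ε g φ) ⊗ₖ ((US HS (τ - φ))ᴴ * fS * US HS (τ - φ)))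
      ((-Complex.I) •
        ((HC ⊗ₖ (1 : Matrix (Fin dS) (Fin dS) ℂ) + (1 : Matrix (Fin dC) (Fin dC) ℂ) ⊗ₖ HS) *
            (ketbraM (clockVec v ε g φ) ⊗ₖ ((US HS (τ - φ))ᴴ * fS * US HS (τ - φ)))
          - (ketbraM (clockVec v ε g φ) ⊗ₖ ((US HS (τ - φ))ᴴ * fS * US HS (τ - φ))) *
            (HC ⊗ₖ (1 : Matrix (Fin dS) (Fin dS) ℂ) + (1 : Matrix (Fin dC) (Fin dC) ℂ) ⊗ₖ HS)))
      φ := by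
  have h1 := ((L1 dC dS).restrictScalars ℝ).hasFDerivAt.comp_hasDerivAt φ (hK v ε g HC hHC heig φ)
  have h2 := ((L2 dC dS).restrictScalars ℝ).hasFDerivAt.comp_hasDerivAt φ (hA HS hHS fS τ φ)
  have h := h1.mul h2
  simp only [ContinuousLinearMap.coe_restrictScalars', Function.comp_def, Pi.mul_def] at h
  replace h : HasDerivAt (fun φ : ℝ => L1 dC dS (ketbraM (clockVec v ε g φ)) *
        L2 dC dS ((US HS (τ - φ))ᴴ * fS * US HS (τ - φ)))
      (L1 dC dS ((-Complex.I) • (HC * ketbraM (clockVec v ε g φ)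
          - ketbraM (clockVec v ε g φ) * HC)) *
        L2 dC dS ((US HS (τ - φ))ᴴ * fS * US HS (τ - φ)) +
        L1 dC dS (ketbraM (clockVec v ε g φ)) *
        L2 dC dS ((-Complex.I) • (HS * ((US HS (τ - φ))ᴴ * fS * US HS (τ - φ))
          - ((US HS (τ - φ))ᴴ * fS * US HS (τ - φ)) * HS))) φ := h
  have hfun : (fun φ : ℝ => L1 dC dS (ketbraM (clockVec v ε g φ)) *
      L2 dC dS ((US HS (τ - φ))ᴴ * fS * US HS (τ - φ))) =
      (fun φ : ℝ => ketbraM (clockVec v ε g φ) ⊗ₖ ((US HS (τ - φ))ᴴ * fS * US HS (τ - φ))) := by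
    funext x
    rw [L1_apply, L2_apply, ← Matrix.mul_kronecker_mul, Matrix.mul_one, Matrix.one_mul]
  rw [hfun] at h
  refine h.congr_deriv ?_
  rw [_root_.map_smul, _root_.map_smul, L1_apply, L2_apply, L1_apply, L2_apply]
  set K := ketbraM (clockVec v ε g φ)
  set A := (US HS (τ - φ))ᴴ * fS * US HS (τ - φ)
  simp only [smul_mul_assoc, mul_smul_comm, kron_sub_left, kron_sub_right, sub_mul, mul_sub,
    add_mul, mul_add, ← Matrix.mul_kronecker_mul, Matrix.one_mul, Matrix.mul_one]
  module

lemma ketbraM_phase (θ : ℝ) (u : Fin dC → ℂ) :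
    ketbraM (Complex.exp (-Complex.I * (θ:ℂ)) • u) = ketbraM u := by
  ext i k
  simp only [ketbraM, Matrix.vecMulVec_apply, Pi.smul_apply, Pi.star_apply, smul_eq_mul,
    star_mul']
  have h1 : star (Complex.exp (-Complex.I * (θ:ℂ))) = Complex.exp (Complex.I * (θ:ℂ)) := by
    rw [Complex.star_def, ← Complex.exp_conj]
    congr 1
    simp [Complex.conj_ofReal]
  have h2 : Complex.exp (-Complex.I * (θ:ℂ)) * Complex.exp (Complex.I * (θ:ℂ)) = 1 := by
    rw [← Complex.exp_add]
    simp
  calc Complex.exp (-Complex.I * (θ:ℂ)) * u i *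
        (star (Complex.exp (-Complex.I * (θ:ℂ))) * star (u k))
      = (Complex.exp (-Complex.I * (θ:ℂ)) * Complex.exp (Complex.I * (θ:ℂ))) *
          (u i * star (u k)) := by rw [h1]; ring
    _ = u i * star (u k) := by rw [h2, one_mul]

lemma clock_period (tmax φ0 : ℝ) (htm : tmax ≠ 0)
    (hlat : ∀ j, ∃ n : ℤ, ε j = (2 * π / tmax) * ((n : ℝ) + φ0 / (2 * π))) :
    clockVec v ε g tmax = Complex.exp (-Complex.I * (φ0:ℂ)) • clockVec v ε g 0 := by
  funext i
  simp only [clockVec, Pi.smul_apply, smul_eq_mul, Finset.mul_sum]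
  refine Finset.sum_congr rfl fun j _ => ?_
  obtain ⟨n, hn⟩ := hlat j
  have hval : ε j * tmax = 2 * π * n + φ0 := by
    rw [hn]
    field_simp
  have hc : (ε j : ℂ) * (tmax : ℂ) = 2 * (π:ℂ) * (n:ℂ) + (φ0:ℂ) := by
    have := congrArg (Complex.ofReal) hval
    push_cast at this
    exact this
  have hexp : Complex.exp (-Complex.I * (ε j:ℂ) * (tmax:ℂ)) =
      Complex.exp (-Complex.I * (φ0:ℂ)) := by
    rw [show -Complex.I * (ε j:ℂ) * (tmax:ℂ) =
        ((-n:ℤ):ℂ) * (2*(π:ℂ)*Complex.I) + (-Complex.I*(φ0:ℂ)) from by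
      push_cast
      linear_combination (-Complex.I) * hc]
    rw [Complex.exp_add, Complex.exp_int_mul_two_pi_mul_I, one_mul]
  rw [hexp]
  simp only [Complex.ofReal_zero, mul_zero, Complex.exp_zero, mul_one]
  ring

lemma A_period (hHS : HS.IsHermitian) (tmax τ : ℝ) :
    (US HS (τ - tmax))ᴴ * fS * US HS (τ - tmax) - (US HS τ)ᴴ * fS * US HS τ =
      (US HS τ)ᴴ * (US HS tmax * fS * (US HS tmax)ᴴ - fS) * US HS τ := by
  have e1 : ((τ:ℂ)) * Complex.I + (-(tmax:ℂ)) * Complex.I =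
      (((τ - tmax : ℝ) : ℂ)) * Complex.I := by
    push_cast
    ring
  have e2 : ((tmax:ℂ)) * Complex.I + (-(τ:ℂ)) * Complex.I =
      (-((τ - tmax : ℝ) : ℂ)) * Complex.I := by
    push_cast
    ring
  have m1 : (US HS τ)ᴴ * US HS tmax = (US HS (τ - tmax))ᴴ := by
    rw [US_conjT HS hHS, US_eq, expS_mul, e1, ← US_conjT HS hHS (τ - tmax)]
  have m2 : (US HS tmax)ᴴ * US HS τ = US HS (τ - tmax) := by
    rw [US_conjT HS hHS, US_eq, expS_mul, e2, ← US_eq HS (τ - tmax)]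
  rw [← m1, ← m2]
  noncomm_ring

lemma part1 (tmax : ℝ) (ht : 0 < tmax) (φ0 : ℝ)
    (hHC : HC.IsHermitian) (hHS : HS.IsHermitian)
    (heig : ∀ j, HC *ᵥ v j = (ε j : ℂ) • v j)
    (hlat : ∀ j, ∃ n : ℤ, ε j = (2 * π / tmax) * ((n : ℝ) + φ0 / (2 * π)))
    (τ : ℝ) :
    relObs v ε g tmax HS fS τ * (HC ⊗ₖ (1 : Matrix (Fin dS) (Fin dS) ℂ) +
        (1 : Matrix (Fin dC) (Fin dC) ℂ) ⊗ₖ HS) -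
      (HC ⊗ₖ (1 : Matrix (Fin dS) (Fin dS) ℂ) +
        (1 : Matrix (Fin dC) (Fin dC) ℂ) ⊗ₖ HS) * relObs v ε g tmax HS fS τ =
    (-Complex.I * (tmax : ℂ)⁻¹) •
      ((ketbraM (clockVec v ε g 0)) ⊗ₖ
        ((US HS τ)ᴴ * (US HS tmax * fS * (US HS tmax)ᴴ - fS) * US HS τ)) := by
  set G := fun φ : ℝ =>
    ketbraM (clockVec v ε g φ) ⊗ₖ ((US HS (τ - φ))ᴴ * fS * US HS (τ - φ)) with hGdef
  set CH := HC ⊗ₖ (1 : Matrix (Fin dS) (Fin dS) ℂ) +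
    (1 : Matrix (Fin dC) (Fin dC) ℂ) ⊗ₖ HS with hCHdef
  have hG : ∀ φ, HasDerivAt G ((-Complex.I) • (CH * G φ - G φ * CH)) φ := fun φ =>
    hG_deriv v ε g HC HS fS hHC hHS heig τ φ
  have hdiff : Differentiable ℝ G := fun φ => (hG φ).differentiableAt
  have contG : Continuous G := hdiff.continuous
  have contG' : Continuous fun φ => (-Complex.I) • (CH * G φ - G φ * CH) :=
    ((continuous_const.mul contG).sub (contG.mul continuous_const)).const_smul (-Complex.I)
  have hFTC : (∫ φ in (0:ℝ)..tmax, (-Complex.I) • (CH * G φ - G φ * CH)) = G tmax - G 0 :=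
    intervalIntegral.integral_eq_sub_of_hasDerivAt (fun φ _ => hG φ)
      (contG'.intervalIntegrable 0 tmax)
  set T := LinearMap.toContinuousLinearMap
    (LinearMap.mulRight ℂ CH - LinearMap.mulLeft ℂ CH) with hTdef
  have hTappl : ∀ X, T X = X * CH - CH * X := by
    intro X
    rw [hTdef]
    rw [LinearMap.coe_toContinuousLinearMap']
    simp only [LinearMap.sub_apply, LinearMap.mulRight_apply, LinearMap.mulLeft_apply]
  have hTint : T (∫ φ in (0:ℝ)..tmax, G φ) = ∫ φ in (0:ℝ)..tmax, T (G φ) :=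
    (T.intervalIntegral_comp_comm (contG.intervalIntegrable 0 tmax)).symm
  have hTG : ∀ φ, T (G φ) = (-Complex.I) • ((-Complex.I) • (CH * G φ - G φ * CH)) := by
    intro φ
    rw [hTappl, smul_smul]
    rw [show (-Complex.I) * (-Complex.I) = (-1 : ℂ) by
      simp [Complex.I_mul_I]]
    rw [neg_one_smul, neg_sub]
  have hrel : relObs v ε g tmax HS fS τ = (tmax : ℂ)⁻¹ • ∫ φ in (0:ℝ)..tmax, G φ := rfl
  rw [hrel, Matrix.smul_mul, Matrix.mul_smul, ← smul_sub, ← hTappl, hTint]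
  simp only [hTG]
  rw [intervalIntegral.integral_smul, hFTC, smul_smul]
  have hketbra : ketbraM (clockVec v ε g tmax) = ketbraM (clockVec v ε g 0) := by
    rw [clock_period v ε g tmax φ0 (ne_of_gt ht) hlat, ketbraM_phase]
  have hGG : G tmax - G 0 = ketbraM (clockVec v ε g 0) ⊗ₖ
      ((US HS τ)ᴴ * (US HS tmax * fS * (US HS tmax)ᴴ - fS) * US HS τ) := by
    simp only [hGdef]
    rw [hketbra, sub_zero, ← kron_sub_right, A_period HS fS hHS tmax τ]
  rw [hGG, mul_comm]

lemma trace_K0 (hv : ∀ j k, star (v j) ⬝ᵥ v k = if j = k then (1:ℂ) else 0) :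
    ∑ i, ketbraM (clockVec v ε g 0) i i = (dC : ℂ) := by
  have hu : ∀ i, clockVec v ε g 0 i = ∑ j, Complex.exp (Complex.I * (g j : ℂ)) * v j i := by
    intro i
    simp [clockVec]
  simp only [ketbraM, Matrix.vecMulVec_apply, Pi.star_apply, hu]
  have hexpand : ∀ i : Fin dC,
      (∑ j, Complex.exp (Complex.I * (g j:ℂ)) * v j i) *
        star (∑ l, Complex.exp (Complex.I * (g l:ℂ)) * v l i) =
      ∑ j, ∑ l, (Complex.exp (Complex.I * (g j:ℂ)) * star (Complex.exp (Complex.I * (g l:ℂ)))) *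
        (v j i * star (v l i)) := by
    intro i
    rw [star_sum, Finset.sum_mul_sum]
    refine Finset.sum_congr rfl fun j _ => Finset.sum_congr rfl fun l _ => ?_
    rw [star_mul']
    ring
  simp only [hexpand]
  rw [Finset.sum_comm]
  have hswap : ∀ j : Fin dC,
      (∑ i, ∑ l, (Complex.exp (Complex.I * (g j:ℂ)) * star (Complex.exp (Complex.I * (g l:ℂ)))) *
        (v j i * star (v l i))) =
      ∑ l, (Complex.exp (Complex.I * (g j:ℂ)) * star (Complex.exp (Complex.I * (g l:ℂ)))) *
        (∑ i, v j i * star (v l i)) := by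
    intro j
    rw [Finset.sum_comm]
    exact Finset.sum_congr rfl fun l _ => by rw [Finset.mul_sum]
  simp only [hswap]
  have hinner : ∀ j l : Fin dC, (∑ i, v j i * star (v l i)) = if l = j then (1:ℂ) else 0 := by
    intro j l
    rw [← hv l j]
    simp only [dotProduct, Pi.star_apply]
    exact Finset.sum_congr rfl fun i _ => mul_comm _ _
  simp only [hinner, mul_ite, mul_one, mul_zero, Finset.sum_ite_eq, Finset.mem_univ, if_true]
  have hone : ∀ j : Fin dC,
      Complex.exp (Complex.I * (g j:ℂ)) * star (Complex.exp (Complex.I * (g j:ℂ))) = 1 := by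
    intro j
    have h1 : star (Complex.exp (Complex.I * (g j:ℂ))) =
        Complex.exp (-(Complex.I * (g j:ℂ))) := by
      rw [Complex.star_def, ← Complex.exp_conj]
      congr 1
      simp [Complex.conj_ofReal]
    rw [h1, ← Complex.exp_add]
    simp
  simp only [Finset.sum_ite_eq, Finset.sum_ite_eq', Finset.mem_univ, if_true, hone]
  simp [Finset.card_univ]

lemma kron_cancel (hdC : 0 < dC)
    (hv : ∀ j k, star (v j) ⬝ᵥ v k = if j = k then (1:ℂ) else 0)
    (D : Matrix (Fin dS) (Fin dS) ℂ)
    (h : ketbraM (clockVec v ε g 0) ⊗ₖ D = 0) : D = 0 := by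
  ext a b
  have h2 : ∀ i k : Fin dC, ketbraM (clockVec v ε g 0) i k * D a b = 0 := by
    intro i k
    have := congrFun (congrFun h (i, a)) (k, b)
    simpa [Matrix.kroneckerMap_apply] using this
  have h3 : (dC : ℂ) * D a b = 0 := by
    rw [← trace_K0 v ε g hv, Finset.sum_mul]
    exact Finset.sum_eq_zero fun i _ => h2 i i
  rcases mul_eq_zero.mp h3 with h4 | h4
  · exact absurd h4 (Nat.cast_ne_zero.mpr hdC.ne')
  · simpa using h4

end Main

end Aux

/-- Theorem 1 of the paper (finite-dimensional case): the commutator of the quantized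
relational observable with the constraint `C_H = H_C ⊗ I + I ⊗ H_S` is
`−(i/t_max)·|0⟩⟨0| ⊗ U_S(τ)†(U_S(t_max) f_S U_S(t_max)† − f_S)U_S(τ)`; in particular it
vanishes iff `f_S` commutes with `U_S(t_max)`. -/
theorem stmt_14 (dC dS : ℕ) (hdC : 0 < dC) (tmax : ℝ) (ht : 0 < tmax) (φ0 : ℝ)
    (hφ0 : φ0 ∈ Set.Ico 0 (2 * π))
    (HC : Matrix (Fin dC) (Fin dC) ℂ) (hHC : HC.IsHermitian)
    (HS : Matrix (Fin dS) (Fin dS) ℂ) (hHS : HS.IsHermitian)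
    (v : Fin dC → Fin dC → ℂ)
    (hv : ∀ j k, star (v j) ⬝ᵥ v k = if j = k then (1 : ℂ) else 0)
    (ε : Fin dC → ℝ) (hsimple : Function.Injective ε)
    (heig : ∀ j, HC *ᵥ v j = (ε j : ℂ) • v j)
    (hlat : ∀ j, ∃ n : ℤ, ε j = (2 * π / tmax) * ((n : ℝ) + φ0 / (2 * π)))
    (g : Fin dC → ℝ)
    (fS : Matrix (Fin dS) (Fin dS) ℂ) :
    (∀ τ : ℝ,
      relObs v ε g tmax HS fS τ * (HC ⊗ₖ (1 : Matrix (Fin dS) (Fin dS) ℂ) +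
          (1 : Matrix (Fin dC) (Fin dC) ℂ) ⊗ₖ HS) -
        (HC ⊗ₖ (1 : Matrix (Fin dS) (Fin dS) ℂ) +
          (1 : Matrix (Fin dC) (Fin dC) ℂ) ⊗ₖ HS) * relObs v ε g tmax HS fS τ =
      (-Complex.I * (tmax : ℂ)⁻¹) •
        ((ketbraM (clockVec v ε g 0)) ⊗ₖ
          ((US HS τ)ᴴ * (US HS tmax * fS * (US HS tmax)ᴴ - fS) * US HS τ))) ∧
    (∀ τ : ℝ,
      (relObs v ε g tmax HS fS τ * (HC ⊗ₖ (1 : Matrix (Fin dS) (Fin dS) ℂ) +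
          (1 : Matrix (Fin dC) (Fin dC) ℂ) ⊗ₖ HS) =
        (HC ⊗ₖ (1 : Matrix (Fin dS) (Fin dS) ℂ) +
          (1 : Matrix (Fin dC) (Fin dC) ℂ) ⊗ₖ HS) * relObs v ε g tmax HS fS τ) ↔
      fS * US HS tmax = US HS tmax * fS) := by
  refine ⟨part1 v ε g HC HS fS tmax ht φ0 hHC hHS heig hlat, ?_⟩
  intro τ
  constructor
  · intro hcomm
    have h1 := part1 v ε g HC HS fS tmax ht φ0 hHC hHS heig hlat τ
    rw [hcomm, sub_self] at h1
    have hs : (-Complex.I * (tmax:ℂ)⁻¹) ≠ 0 :=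
      mul_ne_zero (neg_ne_zero.mpr Complex.I_ne_zero)
        (inv_ne_zero (Complex.ofReal_ne_zero.mpr ht.ne'))
    have hz : ketbraM (clockVec v ε g 0) ⊗ₖ
        ((US HS τ)ᴴ * (US HS tmax * fS * (US HS tmax)ᴴ - fS) * US HS τ) = 0 := by
      rcases smul_eq_zero.mp h1.symm with h | h
      · exact absurd h hs
      · exact h
    have hM0 := kron_cancel v ε g hdC hv _ hz
    have hfix : US HS tmax * fS * (US HS tmax)ᴴ = fS := by
      have h5 := congrArg (fun X => US HS τ * X * (US HS τ)ᴴ) hM0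
      simp only [Matrix.mul_zero, Matrix.zero_mul] at h5
      rw [show US HS τ * ((US HS τ)ᴴ * (US HS tmax * fS * (US HS tmax)ᴴ - fS) * US HS τ) *
            (US HS τ)ᴴ =
          (US HS τ * (US HS τ)ᴴ) * (US HS tmax * fS * (US HS tmax)ᴴ - fS) *
            (US HS τ * (US HS τ)ᴴ) from by noncomm_ring] at h5
      rw [US_mul_conjT HS hHS, Matrix.one_mul, Matrix.mul_one] at h5
      exact sub_eq_zero.mp h5
    have h6 := congrArg (fun X => X * US HS tmax) hfix
    rw [mul_assoc, conjT_mul_US HS hHS, mul_one] at h6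
    exact h6.symm
  · intro hcomm
    have h1 := part1 v ε g HC HS fS tmax ht φ0 hHC hHS heig hlat τ
    have hD : US HS tmax * fS * (US HS tmax)ᴴ - fS = 0 := by
      rw [← hcomm, mul_assoc, US_mul_conjT HS hHS, mul_one, sub_self]
    rw [hD] at h1
    simp only [Matrix.mul_zero, Matrix.zero_mul, Matrix.kronecker_zero, smul_zero] at h1
    exact sub_eq_zero.mp h1
end

section
/- In the setting of Theorem 1, if additionally C_H := H_C⊗I + I⊗H_S generates a t_max-periodic projective representation, i.e. U_CS(t_max) = e^{iθ}·I for some θ, then for every bounded f_S on ℋ_S, F_{f_S,T}(τ) = (1/t_max)·∫₀^{t_max} U_CS(φ)·(|τ⟩⟨τ| ⊗ f_S)·U_CS(φ)† dφ, and [F_{f_S,T}(τ), C_H] = 0. -/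
open Real Matrix Kronecker NormedSpace


namespace Stmt15

variable {N : Type*} [Fintype N] [DecidableEq N]

theorem exp_mulVec_eigen (A : Matrix N N ℂ) {u : N → ℂ} {μ : ℂ}
    (h : A *ᵥ u = μ • u) :
    NormedSpace.exp A *ᵥ u = Complex.exp μ • u := by
  letI : SeminormedRing (Matrix N N ℂ) := Matrix.linftyOpSemiNormedRing
  letI : NormedRing (Matrix N N ℂ) := Matrix.linftyOpNormedRing
  letI : NormedAlgebra ℂ (Matrix N N ℂ) := Matrix.linftyOpNormedAlgebra
  have hpow : ∀ k : ℕ, A ^ k *ᵥ u = μ ^ k • u := by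
    intro k
    induction k with
    | zero => simp
    | succ k ih =>
      rw [pow_succ, ← Matrix.mulVec_mulVec, h, Matrix.mulVec_smul, ih, smul_smul, pow_succ,
        mul_comm]
  let L : Matrix N N ℂ →ₗ[ℂ] (N → ℂ) :=
    { toFun := fun M => M *ᵥ u
      map_add' := fun M N => Matrix.add_mulVec M N u
      map_smul' := fun c M => Matrix.smul_mulVec c M u }
  have hLc : Continuous L := L.continuous_of_finiteDimensional
  have hs : HasSum (fun k : ℕ => ((k.factorial : ℂ)⁻¹) • A ^ k) (NormedSpace.exp A) := by
    rw [NormedSpace.exp_eq_tsum ℂ]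
    exact (NormedSpace.expSeries_summable' (𝕂 := ℂ) A).hasSum
  have hs2 := (hs.mapL ⟨L, hLc⟩ :)
  have hs2' : HasSum (fun k : ℕ => ((k.factorial : ℂ)⁻¹ * μ ^ k) • u)
      (NormedSpace.exp A *ᵥ u) := by
    convert hs2 using 2 with k
    · simp only [ContinuousLinearMap.coe_mk', L, LinearMap.coe_mk, AddHom.coe_mk,
        Matrix.smul_mulVec, hpow k, smul_smul]
    · rfl
  have hsc : HasSum (fun k : ℕ => (k.factorial : ℂ)⁻¹ * μ ^ k) (Complex.exp μ) := by
    rw [Complex.exp_eq_exp_ℂ, NormedSpace.exp_eq_tsum ℂ]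
    simpa [smul_eq_mul] using (NormedSpace.expSeries_summable' (𝕂 := ℂ) μ).hasSum
  exact hs2'.unique (hsc.smul_const u)


/-- `A ↦ A ⊗ₖ 1` as an algebra homomorphism. -/
noncomputable def kronL (dC dS : ℕ) :
    Matrix (Fin dC) (Fin dC) ℂ →ₐ[ℂ] Matrix (Fin dC × Fin dS) (Fin dC × Fin dS) ℂ where
  toFun A := A ⊗ₖ (1 : Matrix (Fin dS) (Fin dS) ℂ)
  map_one' := Matrix.one_kronecker_one
  map_mul' A B := by rw [← Matrix.mul_kronecker_mul, one_mul]
  map_zero' := Matrix.zero_kronecker _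
  map_add' A B := Matrix.add_kronecker A B _
  commutes' c := by
    simp [Algebra.algebraMap_eq_smul_one, Matrix.smul_kronecker, Matrix.one_kronecker_one]

/-- `B ↦ 1 ⊗ₖ B` as an algebra homomorphism. -/
noncomputable def kronR (dC dS : ℕ) :
    Matrix (Fin dS) (Fin dS) ℂ →ₐ[ℂ] Matrix (Fin dC × Fin dS) (Fin dC × Fin dS) ℂ where
  toFun B := (1 : Matrix (Fin dC) (Fin dC) ℂ) ⊗ₖ B
  map_one' := Matrix.one_kronecker_one
  map_mul' A B := by rw [← Matrix.mul_kronecker_mul, one_mul]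
  map_zero' := Matrix.kronecker_zero _
  map_add' A B := Matrix.kronecker_add _ A B
  commutes' c := by
    simp [Algebra.algebraMap_eq_smul_one, Matrix.kronecker_smul, Matrix.one_kronecker_one]

theorem exp_kron_one {dC dS : ℕ} (A : Matrix (Fin dC) (Fin dC) ℂ) :
    NormedSpace.exp (A ⊗ₖ (1 : Matrix (Fin dS) (Fin dS) ℂ))
      = NormedSpace.exp A ⊗ₖ (1 : Matrix (Fin dS) (Fin dS) ℂ) := by
  letI : SeminormedRing (Matrix (Fin dC) (Fin dC) ℂ) := Matrix.linftyOpSemiNormedRing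
  letI : NormedRing (Matrix (Fin dC) (Fin dC) ℂ) := Matrix.linftyOpNormedRing
  letI : NormedAlgebra ℂ (Matrix (Fin dC) (Fin dC) ℂ) := Matrix.linftyOpNormedAlgebra
  letI : NormedAlgebra ℚ (Matrix (Fin dC) (Fin dC) ℂ) := Matrix.linftyOpNormedAlgebra
  haveI : @CompleteSpace (Matrix (Fin dC) (Fin dC) ℂ) PseudoMetricSpace.toUniformSpace := FiniteDimensional.complete ℂ _
  letI : SeminormedRing (Matrix (Fin dC × Fin dS) (Fin dC × Fin dS) ℂ) :=
    Matrix.linftyOpSemiNormedRing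
  letI : NormedRing (Matrix (Fin dC × Fin dS) (Fin dC × Fin dS) ℂ) := Matrix.linftyOpNormedRing
  letI : NormedAlgebra ℂ (Matrix (Fin dC × Fin dS) (Fin dC × Fin dS) ℂ) :=
    Matrix.linftyOpNormedAlgebra
  have hc : Continuous (kronL dC dS) :=
    LinearMap.continuous_of_finiteDimensional (kronL dC dS).toLinearMap
  exact (map_exp (kronL dC dS) hc A).symm

theorem exp_one_kron {dC dS : ℕ} (B : Matrix (Fin dS) (Fin dS) ℂ) :
    NormedSpace.exp ((1 : Matrix (Fin dC) (Fin dC) ℂ) ⊗ₖ B)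
      = (1 : Matrix (Fin dC) (Fin dC) ℂ) ⊗ₖ NormedSpace.exp B := by
  letI : SeminormedRing (Matrix (Fin dS) (Fin dS) ℂ) := Matrix.linftyOpSemiNormedRing
  letI : NormedRing (Matrix (Fin dS) (Fin dS) ℂ) := Matrix.linftyOpNormedRing
  letI : NormedAlgebra ℂ (Matrix (Fin dS) (Fin dS) ℂ) := Matrix.linftyOpNormedAlgebra
  letI : NormedAlgebra ℚ (Matrix (Fin dS) (Fin dS) ℂ) := Matrix.linftyOpNormedAlgebra
  haveI : @CompleteSpace (Matrix (Fin dS) (Fin dS) ℂ) PseudoMetricSpace.toUniformSpace := FiniteDimensional.complete ℂ _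
  letI : SeminormedRing (Matrix (Fin dC × Fin dS) (Fin dC × Fin dS) ℂ) :=
    Matrix.linftyOpSemiNormedRing
  letI : NormedRing (Matrix (Fin dC × Fin dS) (Fin dC × Fin dS) ℂ) := Matrix.linftyOpNormedRing
  letI : NormedAlgebra ℂ (Matrix (Fin dC × Fin dS) (Fin dC × Fin dS) ℂ) :=
    Matrix.linftyOpNormedAlgebra
  have hc : Continuous (kronR dC dS) :=
    LinearMap.continuous_of_finiteDimensional (kronR dC dS).toLinearMap
  exact (map_exp (kronR dC dS) hc B).symm


/-- One-parameter group generated by `A`. -/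
noncomputable def eline (A : Matrix N N ℂ) (t : ℝ) :
    Matrix N N ℂ :=
  NormedSpace.exp ((-(t : ℂ) * Complex.I) • A)

theorem eline_add (A : Matrix N N ℂ) (a b : ℝ) :
    eline A (a + b) = eline A a * eline A b := by
  unfold eline
  have h : (-(((a : ℝ) + b : ℝ) : ℂ) * Complex.I) • A
      = (-(a : ℂ) * Complex.I) • A + (-(b : ℂ) * Complex.I) • A := by
    rw [← add_smul]
    congr 1
    push_cast
    ring
  rw [h]
  exact Matrix.exp_add_of_commute _ _ (((Commute.refl A).smul_left _).smul_right _)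

theorem eline_zero (A : Matrix N N ℂ) : eline A 0 = 1 := by
  simp [eline, NormedSpace.exp_zero]

theorem eline_mul_neg (A : Matrix N N ℂ) (t : ℝ) :
    eline A t * eline A (-t) = 1 := by
  rw [← eline_add, add_neg_cancel, eline_zero]

theorem eline_neg_mul (A : Matrix N N ℂ) (t : ℝ) :
    eline A (-t) * eline A t = 1 := by
  rw [← eline_add, neg_add_cancel, eline_zero]

theorem eline_conjTranspose {A : Matrix N N ℂ} (hA : A.IsHermitian) (t : ℝ) :
    (eline A t)ᴴ = eline A (-t) := by
  unfold eline
  rw [← Matrix.exp_conjTranspose]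
  congr 1
  rw [Matrix.conjTranspose_smul, hA.eq]
  congr 1
  simp [Complex.star_def, Complex.conj_ofReal]

theorem continuous_eline (A : Matrix N N ℂ) : Continuous (eline A) := by
  letI : SeminormedRing (Matrix N N ℂ) := Matrix.linftyOpSemiNormedRing
  letI : NormedRing (Matrix N N ℂ) := Matrix.linftyOpNormedRing
  letI : NormedAlgebra ℂ (Matrix N N ℂ) := Matrix.linftyOpNormedAlgebra
  letI : NormedAlgebra ℚ (Matrix N N ℂ) := Matrix.linftyOpNormedAlgebra
  haveI : @CompleteSpace (Matrix N N ℂ) PseudoMetricSpace.toUniformSpace := FiniteDimensional.complete ℂ _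
  have h1 : Continuous fun t : ℝ => (-(t : ℂ) * Complex.I) • A :=
    ((Complex.continuous_ofReal.neg).mul continuous_const).smul continuous_const
  exact (NormedSpace.exp_continuous).comp h1

theorem hasDerivAt_comp_ofReal {E : Type*} [NormedAddCommGroup E] [NormedSpace ℂ E]
    {e : ℂ → E} {e' : E} {z : ℝ} (hf : HasDerivAt e e' ↑z) :
    HasDerivAt (fun y : ℝ => e ↑y) e' z := by
  have h1 := (hf.hasFDerivAt.restrictScalars ℝ).comp_hasDerivAt z
    Complex.ofRealCLM.hasDerivAt
  simpa [Function.comp_def] using h1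

theorem comm_of_comm_eline (C S : Matrix N N ℂ)
    (h : ∀ s : ℝ, eline C s * S = S * eline C s) :
    C * S = S * C := by
  letI : SeminormedRing (Matrix N N ℂ) := Matrix.linftyOpSemiNormedRing
  letI : NormedRing (Matrix N N ℂ) := Matrix.linftyOpNormedRing
  letI : NormedAlgebra ℂ (Matrix N N ℂ) := Matrix.linftyOpNormedAlgebra
  set B : Matrix N N ℂ := (-Complex.I) • C with hB
  have key : ∀ s : ℝ, (-(s : ℂ) * Complex.I) • C = (s : ℂ) • B := by
    intro s
    rw [hB, smul_smul]
    congr 1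
    ring
  have hder : ∀ s : ℝ, HasDerivAt (fun y : ℝ => NormedSpace.exp ((y : ℂ) • B))
      (NormedSpace.exp ((s : ℂ) • B) * B) s := by
    intro s
    exact hasDerivAt_comp_ofReal (hasDerivAt_exp_smul_const (𝕂 := ℂ) B (s : ℂ))
  have hf0 : (fun s : ℝ => NormedSpace.exp ((s : ℂ) • B) * S
      - S * NormedSpace.exp ((s : ℂ) • B)) = fun _ => 0 := by
    funext s
    have hs := h s
    unfold eline at hs
    rw [key s] at hs
    rw [hs, sub_self]
  have hd1 : HasDerivAt (fun s : ℝ => NormedSpace.exp ((s : ℂ) • B) * S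
      - S * NormedSpace.exp ((s : ℂ) • B))
      (NormedSpace.exp (((0 : ℝ) : ℂ) • B) * B * S
        - S * (NormedSpace.exp (((0 : ℝ) : ℂ) • B) * B)) 0 :=
    ((hder 0).mul_const S).sub ((hder 0).const_mul S)
  rw [hf0] at hd1
  have h0 := hd1.unique (hasDerivAt_const 0 0)
  simp only [Complex.ofReal_zero, zero_smul, NormedSpace.exp_zero, one_mul] at h0
  have h1 : B * S = S * B := by
    have := sub_eq_zero.mp h0
    exact this
  rw [hB, smul_mul_assoc, mul_smul_comm] at h1
  exact smul_right_injective _ (neg_ne_zero.mpr Complex.I_ne_zero) h1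

end Stmt15

attribute [local instance] Matrix.frobeniusNormedAddCommGroup Matrix.frobeniusNormedSpace

/-- The constraint unitary `U_{CS}(t) = exp(-i t C_H)` for `C_H = H_C ⊗ I + I ⊗ H_S`. -/
noncomputable def UCS {dC dS : ℕ} (HC : Matrix (Fin dC) (Fin dC) ℂ)
    (HS : Matrix (Fin dS) (Fin dS) ℂ) (t : ℝ) :
    Matrix (Fin dC × Fin dS) (Fin dC × Fin dS) ℂ :=
  NormedSpace.exp ((-(t : ℂ) * Complex.I) •
    (HC ⊗ₖ (1 : Matrix (Fin dS) (Fin dS) ℂ) + (1 : Matrix (Fin dC) (Fin dC) ℂ) ⊗ₖ HS))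

section Post

open Stmt15

variable {dC dS : ℕ}

theorem kron_conjT {a b : ℕ} (A : Matrix (Fin a) (Fin a) ℂ) (B : Matrix (Fin b) (Fin b) ℂ) :
    (A ⊗ₖ B)ᴴ = Aᴴ ⊗ₖ Bᴴ := by
  ext ⟨i, p⟩ ⟨j, q⟩
  simp [Matrix.conjTranspose_apply, Matrix.kroneckerMap_apply, star_mul', mul_comm]

theorem ketbra_conj {d : ℕ} (A : Matrix (Fin d) (Fin d) ℂ) (u : Fin d → ℂ) :
    A * ketbraM u * Aᴴ = ketbraM (A *ᵥ u) := by
  rw [ketbraM, ketbraM, Matrix.vecMulVec_eq Unit, Matrix.vecMulVec_eq Unit,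
    Matrix.star_mulVec, Matrix.replicateCol_mulVec, Matrix.replicateRow_vecMul]
  rw [Matrix.mul_assoc, Matrix.mul_assoc, Matrix.mul_assoc]

theorem ketbra_smul_unimodular {d : ℕ} {a : ℂ} (h : a * star a = 1) (u : Fin d → ℂ) :
    ketbraM (a • u) = ketbraM u := by
  ext i j
  simp only [ketbraM, Matrix.vecMulVec_apply, Pi.star_apply, Pi.smul_apply, smul_eq_mul,
    star_mul']
  calc a * u i * (star a * star (u j)) = (a * star a) * (u i * star (u j)) := by ring
  _ = u i * star (u j) := by rw [h, one_mul]

theorem clockVec_eq_sum (v : Fin dC → Fin dC → ℂ) (ε g : Fin dC → ℝ) (t : ℝ) :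
    clockVec v ε g t = ∑ j, (Complex.exp (Complex.I * (g j : ℂ)) *
      Complex.exp (-Complex.I * (ε j : ℂ) * (t : ℂ))) • v j := by
  funext i
  simp [clockVec, Finset.sum_apply, Pi.smul_apply, smul_eq_mul, mul_assoc]

theorem UCS_eq_kron (HC : Matrix (Fin dC) (Fin dC) ℂ) (HS : Matrix (Fin dS) (Fin dS) ℂ)
    (t : ℝ) : UCS HC HS t = eline HC t ⊗ₖ eline HS t := by
  have hcomm : Commute ((-(t : ℂ) * Complex.I) • (HC ⊗ₖ (1 : Matrix (Fin dS) (Fin dS) ℂ)))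
      ((-(t : ℂ) * Complex.I) • ((1 : Matrix (Fin dC) (Fin dC) ℂ) ⊗ₖ HS)) := by
    refine (Commute.smul_left ?_ _).smul_right _
    show _ * _ = _ * _
    rw [← Matrix.mul_kronecker_mul, ← Matrix.mul_kronecker_mul, one_mul, mul_one, one_mul,
      mul_one]
  rw [UCS, smul_add, Matrix.exp_add_of_commute _ _ hcomm,
    ← Matrix.smul_kronecker, ← Matrix.kronecker_smul, exp_kron_one, exp_one_kron,
    ← Matrix.mul_kronecker_mul, one_mul, mul_one]
  rfl

theorem eline_mulVec_eig (HC : Matrix (Fin dC) (Fin dC) ℂ) (u : Fin dC → ℂ) (μ : ℝ)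
    (h : HC *ᵥ u = (μ : ℂ) • u) (t : ℝ) :
    eline HC t *ᵥ u = Complex.exp (-(t : ℂ) * Complex.I * (μ : ℂ)) • u := by
  apply exp_mulVec_eigen
  rw [Matrix.smul_mulVec, h, smul_smul]

theorem clock_evolve (HC : Matrix (Fin dC) (Fin dC) ℂ) (v : Fin dC → Fin dC → ℂ)
    (ε g : Fin dC → ℝ) (heig : ∀ j, HC *ᵥ v j = ((ε j : ℝ) : ℂ) • v j) (τ φ : ℝ) :
    eline HC φ *ᵥ clockVec v ε g τ = clockVec v ε g (τ + φ) := by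
  rw [clockVec_eq_sum, clockVec_eq_sum, ← Matrix.mulVecLin_apply, map_sum]
  refine Finset.sum_congr rfl fun j _ => ?_
  rw [_root_.map_smul, Matrix.mulVecLin_apply, eline_mulVec_eig HC (v j) (ε j) (heig j) φ, smul_smul]
  rw [mul_assoc, ← Complex.exp_add]
  congr 2
  push_cast
  ring

theorem clock_periodic (v : Fin dC → Fin dC → ℂ) (ε g : Fin dC → ℝ) {tmax φ0 : ℝ}
    (ht : tmax ≠ 0) (hlat : ∀ j, ∃ n : ℤ, ε j = (2 * π / tmax) * ((n : ℝ) + φ0 / (2 * π)))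
    (ψ : ℝ) :
    clockVec v ε g (ψ + tmax) = Complex.exp (-Complex.I * (φ0 : ℂ)) • clockVec v ε g ψ := by
  funext i
  simp only [clockVec, Pi.smul_apply, smul_eq_mul, Finset.mul_sum]
  refine Finset.sum_congr rfl fun j _ => ?_
  obtain ⟨n, hn⟩ := hlat j
  have hπ : (π : ℝ) ≠ 0 := Real.pi_ne_zero
  have hr : ε j * tmax = 2 * π * n + φ0 := by
    rw [hn]; field_simp
  have hkey : Complex.exp (-Complex.I * (ε j : ℂ) * ((ψ + tmax : ℝ) : ℂ))
      = Complex.exp (-Complex.I * (φ0 : ℂ)) * Complex.exp (-Complex.I * (ε j : ℂ) * (ψ : ℂ)) := by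
    have h2 : ((ε j * tmax : ℝ) : ℂ) = 2 * (π : ℂ) * (n : ℂ) + (φ0 : ℂ) := by
      rw [hr]; push_cast; ring
    have h1 : -Complex.I * (ε j : ℂ) * ((ψ + tmax : ℝ) : ℂ)
        = ((-n : ℤ) : ℂ) * (2 * (π : ℂ) * Complex.I)
          + (-Complex.I * (φ0 : ℂ) + -Complex.I * (ε j : ℂ) * (ψ : ℂ)) := by
      push_cast at h2 ⊢
      linear_combination (-Complex.I) * h2
    rw [h1, Complex.exp_add, Complex.exp_int_mul_two_pi_mul_I, one_mul, Complex.exp_add]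
  push_cast at hkey ⊢
  rw [hkey]
  ring

theorem US_eq_eline (HS : Matrix (Fin dS) (Fin dS) ℂ) (t : ℝ) : US HS t = eline HS t := rfl

end Post

/-- If the constraint generates a `t_max`-periodic projective representation of `U(1)`,
i.e. `U_{CS}(t_max) = e^{iθ}·I`, then for every system observable `f_S` the relational
observable equals the one-cycle group average (partial `G`-twirl)
`(1/t_max)·∫₀^{t_max} U_{CS}(φ)(|τ⟩⟨τ| ⊗ f_S)U_{CS}(φ)† dφ` and commutes with the
constraint `C_H`. -/
theorem stmt_15 (dC dS : ℕ) (hdC : 0 < dC) (tmax : ℝ) (ht : 0 < tmax) (φ0 : ℝ)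
    (hφ0 : φ0 ∈ Set.Ico 0 (2 * π))
    (HC : Matrix (Fin dC) (Fin dC) ℂ) (hHC : HC.IsHermitian)
    (HS : Matrix (Fin dS) (Fin dS) ℂ) (hHS : HS.IsHermitian)
    (v : Fin dC → Fin dC → ℂ)
    (hv : ∀ j k, star (v j) ⬝ᵥ v k = if j = k then (1 : ℂ) else 0)
    (ε : Fin dC → ℝ) (hsimple : Function.Injective ε)
    (heig : ∀ j, HC *ᵥ v j = (ε j : ℂ) • v j)
    (hlat : ∀ j, ∃ n : ℤ, ε j = (2 * π / tmax) * ((n : ℝ) + φ0 / (2 * π)))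
    (g : Fin dC → ℝ)
    (fS : Matrix (Fin dS) (Fin dS) ℂ)
    (hper : ∃ θ : ℝ, UCS HC HS tmax =
      Complex.exp (Complex.I * (θ : ℂ)) • (1 : Matrix (Fin dC × Fin dS) (Fin dC × Fin dS) ℂ)) :
    (∀ τ : ℝ,
      relObs v ε g tmax HS fS τ =
        (tmax : ℂ)⁻¹ • ∫ φ in (0:ℝ)..tmax,
          UCS HC HS φ * ((ketbraM (clockVec v ε g τ)) ⊗ₖ fS) * (UCS HC HS φ)ᴴ) ∧
    (∀ τ : ℝ,
      relObs v ε g tmax HS fS τ * (HC ⊗ₖ (1 : Matrix (Fin dS) (Fin dS) ℂ) +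
          (1 : Matrix (Fin dC) (Fin dC) ℂ) ⊗ₖ HS) =
        (HC ⊗ₖ (1 : Matrix (Fin dS) (Fin dS) ℂ) +
          (1 : Matrix (Fin dC) (Fin dC) ℂ) ⊗ₖ HS) * relObs v ε g tmax HS fS τ) := by
  classical
  obtain ⟨θ, hθ⟩ := hper
  rcases Nat.eq_zero_or_pos dS with hdS | hdS
  · subst hdS
    constructor <;> intro τ <;> ext x y <;> exact x.2.elim0
  set Cm : Matrix (Fin dC × Fin dS) (Fin dC × Fin dS) ℂ :=
    HC ⊗ₖ (1 : Matrix (Fin dS) (Fin dS) ℂ) + (1 : Matrix (Fin dC) (Fin dC) ℂ) ⊗ₖ HS with hCm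
  have hCmH : Cm.IsHermitian := by
    show Cmᴴ = Cm
    simp [hCm, Matrix.conjTranspose_add, kron_conjT, hHC.eq, hHS.eq]
  have hUCSe : ∀ t, UCS HC HS t = Stmt15.eline Cm t := fun t => rfl
  have hUCSadd : ∀ a b : ℝ, UCS HC HS (a + b) = UCS HC HS a * UCS HC HS b := fun a b =>
    Stmt15.eline_add Cm a b
  have hUCSconj : ∀ t : ℝ, (UCS HC HS t)ᴴ = UCS HC HS (-t) := fun t =>
    Stmt15.eline_conjTranspose hCmH t
  have hUCSnm : ∀ s : ℝ, UCS HC HS (-s) * UCS HC HS s = 1 := fun s =>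
    Stmt15.eline_neg_mul Cm s
  have hUSconj : ∀ t : ℝ, (US HS t)ᴴ = US HS (-t) := fun t =>
    Stmt15.eline_conjTranspose hHS t
  have hUSadd : ∀ a b : ℝ, US HS (a + b) = US HS a * US HS b := fun a b =>
    Stmt15.eline_add HS a b
  -- extract the system phase
  have hK : Stmt15.eline HC tmax ⊗ₖ Stmt15.eline HS tmax
      = Complex.exp (Complex.I * (θ : ℂ)) • (1 : Matrix (Fin dC × Fin dS) (Fin dC × Fin dS) ℂ) := by
    rw [← UCS_eq_kron]; exact hθ
  set j0 : Fin dC := ⟨0, hdC⟩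
  set a0 : Fin dS := ⟨0, hdS⟩
  have hv0 : star (v j0) ⬝ᵥ v j0 = 1 := by simpa using hv j0 j0
  obtain ⟨k0, hk0⟩ : ∃ k, v j0 k ≠ 0 := by
    by_contra h
    push_neg at h
    rw [show star (v j0) ⬝ᵥ v j0 = 0 by simp [dotProduct, h]] at hv0
    exact one_ne_zero hv0.symm
  obtain ⟨l0, hl0⟩ : ∃ l, Stmt15.eline HC tmax k0 l ≠ 0 := by
    by_contra h
    push_neg at h
    have h2 : (Stmt15.eline HC tmax *ᵥ v j0) k0 = 0 := by
      simp [Matrix.mulVec, dotProduct, h]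
    rw [eline_mulVec_eig HC (v j0) (ε j0) (heig j0) tmax] at h2
    simp only [Pi.smul_apply, smul_eq_mul, mul_eq_zero, Complex.exp_ne_zero, false_or] at h2
    exact hk0 h2
  have hEntry : ∀ (p q : Fin dC) (a b : Fin dS),
      Stmt15.eline HC tmax p q * Stmt15.eline HS tmax a b
        = Complex.exp (Complex.I * (θ : ℂ)) * (if p = q ∧ a = b then 1 else 0) := by
    intro p q a b
    have h1 := congrFun (congrFun hK (p, a)) (q, b)
    simpa [Matrix.kroneckerMap_apply, Matrix.smul_apply, Matrix.one_apply, Prod.ext_iff,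
      smul_eq_mul] using h1
  have hk0l0 : k0 = l0 := by
    by_contra hne
    have hUS0 : Stmt15.eline HS tmax = 0 := by
      ext a b
      have h1 := hEntry k0 l0 a b
      rw [if_neg (by tauto), mul_zero] at h1
      exact (mul_eq_zero.mp h1).resolve_left hl0
    have h1 := hEntry k0 k0 a0 a0
    rw [hUS0, if_pos ⟨rfl, rfl⟩, mul_one] at h1
    simp only [Matrix.zero_apply, mul_zero] at h1
    exact Complex.exp_ne_zero _ h1.symm
  rw [← hk0l0] at hl0
  set c : ℂ := (Stmt15.eline HC tmax k0 k0)⁻¹ * Complex.exp (Complex.I * (θ : ℂ)) with hc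
  have hUStm : US HS tmax = c • 1 := by
    ext a b
    have h1 := hEntry k0 k0 a b
    simp only [true_and] at h1
    show Stmt15.eline HS tmax a b = (c • (1 : Matrix (Fin dS) (Fin dS) ℂ)) a b
    rw [Matrix.smul_apply, Matrix.one_apply, smul_eq_mul]
    apply mul_left_cancel₀ hl0
    rw [h1, hc]
    field_simp
  have hc1 : c * star c = 1 := by
    have h1 : (c • (1 : Matrix (Fin dS) (Fin dS) ℂ))ᴴ * (c • 1) = 1 := by
      rw [← hUStm, hUSconj]
      exact Stmt15.eline_neg_mul HS tmax
    rw [Matrix.conjTranspose_smul, Matrix.conjTranspose_one, smul_mul_assoc, mul_smul_comm,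
      smul_smul, Matrix.one_mul] at h1
    have h2 := congrFun (congrFun h1 a0) a0
    simp only [Matrix.smul_apply, Matrix.one_apply_eq, smul_eq_mul, mul_one] at h2
    rw [mul_comm] at h2
    exact h2
  have hUSneg : US HS (-tmax) = star c • 1 := by
    rw [← hUSconj, hUStm, Matrix.conjTranspose_smul, Matrix.conjTranspose_one]
  have hphase : Complex.exp (-Complex.I * (φ0 : ℂ))
      * star (Complex.exp (-Complex.I * (φ0 : ℂ))) = 1 := by
    have h1 : star (Complex.exp (-Complex.I * (φ0 : ℂ)))
        = Complex.exp (Complex.I * (φ0 : ℂ)) := by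
      rw [Complex.star_def, ← Complex.exp_conj]
      congr 1
      simp [Complex.conj_ofReal]
    rw [h1, ← Complex.exp_add]
    simp
  -- pointwise identity for part 1
  have hG : ∀ τ φ : ℝ, UCS HC HS φ * ((ketbraM (clockVec v ε g τ)) ⊗ₖ fS) * (UCS HC HS φ)ᴴ
      = ketbraM (clockVec v ε g (τ + φ)) ⊗ₖ
          ((US HS (τ - (τ + φ)))ᴴ * fS * US HS (τ - (τ + φ))) := by
    intro τ φ
    rw [UCS_eq_kron HC HS φ, kron_conjT, ← Matrix.mul_kronecker_mul, ← Matrix.mul_kronecker_mul,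
      ketbra_conj, clock_evolve HC v ε g heig τ φ, show τ - (τ + φ) = -φ by ring]
    congr 1
    rw [show (US HS (-φ))ᴴ = US HS φ from by rw [hUSconj, neg_neg],
      Stmt15.eline_conjTranspose hHS φ]
    rfl
  have hGper : ∀ τ : ℝ, Function.Periodic
      (fun ψ : ℝ => ketbraM (clockVec v ε g ψ) ⊗ₖ ((US HS (τ - ψ))ᴴ * fS * US HS (τ - ψ)))
      tmax := by
    intro τ ψ
    simp only
    have hUSshift : US HS (τ - (ψ + tmax)) = star c • US HS (τ - ψ) := by
      rw [show τ - (ψ + tmax) = (τ - ψ) + (-tmax) by ring, hUSadd, hUSneg, mul_smul_comm,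
        Matrix.mul_one]
    rw [clock_periodic v ε g (ne_of_gt ht) hlat ψ, ketbra_smul_unimodular hphase, hUSshift,
      Matrix.conjTranspose_smul, star_star, smul_mul_assoc, smul_mul_assoc, mul_smul_comm,
      smul_smul, hc1, one_smul]
  have hpart1 : ∀ τ : ℝ, relObs v ε g tmax HS fS τ
      = (tmax : ℂ)⁻¹ • ∫ φ in (0:ℝ)..tmax,
          UCS HC HS φ * ((ketbraM (clockVec v ε g τ)) ⊗ₖ fS) * (UCS HC HS φ)ᴴ := by
    intro τ
    rw [relObs]
    congr 1
    have h1 : (∫ φ in (0:ℝ)..tmax,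
        UCS HC HS φ * ((ketbraM (clockVec v ε g τ)) ⊗ₖ fS) * (UCS HC HS φ)ᴴ)
        = ∫ φ in (0:ℝ)..tmax, (fun ψ : ℝ =>
            ketbraM (clockVec v ε g ψ) ⊗ₖ ((US HS (τ - ψ))ᴴ * fS * US HS (τ - ψ))) (τ + φ) :=
      intervalIntegral.integral_congr fun φ _ => hG τ φ
    rw [h1, intervalIntegral.integral_comp_add_left
        (fun ψ : ℝ => ketbraM (clockVec v ε g ψ) ⊗ₖ ((US HS (τ - ψ))ᴴ * fS * US HS (τ - ψ))) τ,
      add_zero, (hGper τ).intervalIntegral_add_eq τ 0, zero_add]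
  refine ⟨hpart1, fun τ => ?_⟩
  set X : Matrix (Fin dC × Fin dS) (Fin dC × Fin dS) ℂ :=
    (ketbraM (clockVec v ε g τ)) ⊗ₖ fS with hXdef
  set S0 : Matrix (Fin dC × Fin dS) (Fin dC × Fin dS) ℂ :=
    ∫ φ in (0:ℝ)..tmax, UCS HC HS φ * X * (UCS HC HS φ)ᴴ with hS0
  have hrel : relObs v ε g tmax HS fS τ = (tmax : ℂ)⁻¹ • S0 := hpart1 τ
  have hHcont : Continuous fun φ : ℝ => UCS HC HS φ * X * (UCS HC HS φ)ᴴ := by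
    have h1 : Continuous fun φ : ℝ => UCS HC HS φ := Stmt15.continuous_eline Cm
    exact (h1.matrix_mul continuous_const).matrix_mul h1.matrix_conjTranspose
  letI : ENormedAddMonoid (Matrix (Fin dC × Fin dS) (Fin dC × Fin dS) ℂ) :=
    NormedAddCommGroup.toENormedAddCommMonoid.toENormedAddMonoid
  have hHint : IntervalIntegrable (fun φ : ℝ => UCS HC HS φ * X * (UCS HC HS φ)ᴴ)
      MeasureTheory.volume 0 tmax := hHcont.intervalIntegrable 0 tmax
  have hHper : Function.Periodic (fun φ : ℝ => UCS HC HS φ * X * (UCS HC HS φ)ᴴ) tmax := by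
    intro ψ
    simp only
    have h1 : UCS HC HS (ψ + tmax) = Complex.exp (Complex.I * (θ : ℂ)) • UCS HC HS ψ := by
      rw [hUCSadd, hθ, mul_smul_comm, Matrix.mul_one]
    have h2 : star (Complex.exp (Complex.I * (θ : ℂ)))
        = Complex.exp (-(Complex.I * (θ : ℂ))) := by
      rw [Complex.star_def, ← Complex.exp_conj]
      congr 1
      simp [Complex.conj_ofReal]
    rw [h1, Matrix.conjTranspose_smul, h2, smul_mul_assoc, smul_mul_assoc, mul_smul_comm,
      smul_smul, ← Complex.exp_add, add_neg_cancel, Complex.exp_zero, one_smul]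
  have hconj : ∀ s : ℝ, UCS HC HS s * S0 * UCS HC HS (-s) = S0 := by
    intro s
    let Lm : Matrix (Fin dC × Fin dS) (Fin dC × Fin dS) ℂ →ₗ[ℂ]
        Matrix (Fin dC × Fin dS) (Fin dC × Fin dS) ℂ :=
      { toFun := fun M => UCS HC HS s * M * UCS HC HS (-s)
        map_add' := fun M N => by simp [Matrix.mul_add, Matrix.add_mul]
        map_smul' := fun r M => by simp [mul_smul_comm, smul_mul_assoc] }
    have hLc : Continuous Lm := Lm.continuous_of_finiteDimensional
    have hmap := ContinuousLinearMap.intervalIntegral_comp_comm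
      (⟨Lm, hLc⟩ : Matrix (Fin dC × Fin dS) (Fin dC × Fin dS) ℂ →L[ℂ]
        Matrix (Fin dC × Fin dS) (Fin dC × Fin dS) ℂ) hHint
    have h4 : ∀ φ : ℝ, UCS HC HS s * (UCS HC HS φ * X * (UCS HC HS φ)ᴴ) * UCS HC HS (-s)
        = (fun ψ : ℝ => UCS HC HS ψ * X * (UCS HC HS ψ)ᴴ) (s + φ) := by
      intro φ
      show _ = UCS HC HS (s + φ) * X * (UCS HC HS (s + φ))ᴴ
      rw [hUCSconj (s + φ), show -(s + φ) = -φ + -s by ring, hUCSadd (-φ) (-s), hUCSadd s φ,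
        ← hUCSconj φ]
      simp only [Matrix.mul_assoc]
    calc UCS HC HS s * S0 * UCS HC HS (-s)
        = ∫ φ in (0:ℝ)..tmax,
            UCS HC HS s * (UCS HC HS φ * X * (UCS HC HS φ)ᴴ) * UCS HC HS (-s) := hmap.symm
      _ = ∫ φ in (0:ℝ)..tmax, (fun ψ : ℝ => UCS HC HS ψ * X * (UCS HC HS ψ)ᴴ) (s + φ) :=
          intervalIntegral.integral_congr fun φ _ => h4 φ
      _ = ∫ ψ in (s + (0:ℝ))..(s + tmax), UCS HC HS ψ * X * (UCS HC HS ψ)ᴴ :=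
          intervalIntegral.integral_comp_add_left
            (fun ψ : ℝ => UCS HC HS ψ * X * (UCS HC HS ψ)ᴴ) s
      _ = S0 := by rw [add_zero, hHper.intervalIntegral_add_eq s 0, zero_add]
  have hcommU : ∀ s : ℝ, Stmt15.eline Cm s * S0 = S0 * Stmt15.eline Cm s := by
    intro s
    have h1 := congrArg (fun M => M * UCS HC HS s) (hconj s)
    simp only [Matrix.mul_assoc] at h1
    rw [hUCSnm s, Matrix.mul_one] at h1
    exact h1
  have hCS : Cm * S0 = S0 * Cm := Stmt15.comm_of_comm_eline Cm S0 hcommU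
  rw [hrel, smul_mul_assoc, mul_smul_comm, hCS]
end

section
/- Let Π_phys be the orthogonal projection onto ker(C_H) in a finite-dimensional ℋ_C ⊗ ℋ_S where C_H generates a t̃_max-periodic projective representation, U_CS(t̃_max) = e^{iθ}I, with t̃_max = N·t_max. Then for any two physical states |ψ⟩, |χ⟩ ∈ ker(C_H) and any τ, ⟨χ| (|τ⟩⟨τ| ⊗ I_S) |ψ⟩ = ⟨χ|ψ⟩. That is, the conditional inner product obtained by projecting onto the clock reading τ coincides with the ordinary inner product on the physical subspace, independently of τ. -/
open Real Matrix Kronecker NormedSpace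

lemma aux_complete {dC : ℕ} (v : Fin dC → Fin dC → ℂ)
    (hv : ∀ j k, star (v j) ⬝ᵥ v k = if j = k then (1 : ℂ) else 0) :
    ∀ i i', ∑ j, v j i * starRingEnd ℂ (v j i') = if i = i' then (1 : ℂ) else 0 := by
  have h1 : (Matrix.of (fun i j => v j i))ᴴ * (Matrix.of (fun i j => v j i)) = 1 := by
    ext j k
    simpa [Matrix.mul_apply, Matrix.conjTranspose_apply, Matrix.one_apply, dotProduct] using hv j k
  have h2 := mul_eq_one_comm.mp h1
  intro i i'
  have h3 := congrFun (congrFun h2 i) i'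
  simpa [Matrix.mul_apply, Matrix.conjTranspose_apply, Matrix.one_apply] using h3

lemma aux_expand {dC dS : ℕ} (v : Fin dC → Fin dC → ℂ)
    (hVV : ∀ i i', ∑ j, v j i * starRingEnd ℂ (v j i') = if i = i' then (1 : ℂ) else 0)
    (x : Fin dC × Fin dS → ℂ) (i : Fin dC) (s : Fin dS) :
    x (i, s) = ∑ j, v j i * ∑ i', starRingEnd ℂ (v j i') * x (i', s) := by
  calc x (i, s) = ∑ i', (∑ j, v j i * starRingEnd ℂ (v j i')) * x (i', s) := by
        simp only [hVV, ite_mul, one_mul, zero_mul, Finset.sum_ite_eq, Finset.mem_univ, if_true]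
    _ = ∑ j, v j i * ∑ i', starRingEnd ℂ (v j i') * x (i', s) := by
        simp only [Finset.sum_mul, Finset.mul_sum]
        rw [Finset.sum_comm]
        exact Finset.sum_congr rfl fun j _ => Finset.sum_congr rfl fun i' _ => by ring

lemma aux_entry {dC dS : ℕ} (HC : Matrix (Fin dC) (Fin dC) ℂ) (HS : Matrix (Fin dS) (Fin dS) ℂ)
    (x : Fin dC × Fin dS → ℂ)
    (hx : (HC ⊗ₖ (1 : Matrix (Fin dS) (Fin dS) ℂ) +
      (1 : Matrix (Fin dC) (Fin dC) ℂ) ⊗ₖ HS) *ᵥ x = 0) (i : Fin dC) (s : Fin dS) :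
    (∑ i', HC i i' * x (i', s)) + (∑ s', HS s s' * x (i, s')) = 0 := by
  have h := congrFun hx (i, s)
  simp only [Matrix.mulVec, dotProduct, Fintype.sum_prod_type, Matrix.add_apply,
    Matrix.kroneckerMap_apply, Matrix.one_apply, Pi.zero_apply, add_mul, ite_mul, mul_ite,
    mul_one, mul_zero, one_mul, zero_mul, Finset.sum_add_distrib, Finset.sum_ite_eq,
    Finset.sum_ite_irrel, Finset.sum_const_zero,
    Finset.sum_ite_eq', Finset.mem_univ, if_true] at h
  exact h

lemma aux_row {dC : ℕ} (HC : Matrix (Fin dC) (Fin dC) ℂ) (hHC : HC.IsHermitian)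
    (v : Fin dC → Fin dC → ℂ) (ε : Fin dC → ℝ) (j : Fin dC)
    (heig : HC *ᵥ v j = (ε j : ℂ) • v j) (i' : Fin dC) :
    ∑ i, starRingEnd ℂ (v j i) * HC i i' = (ε j : ℂ) * starRingEnd ℂ (v j i') := by
  have h := congrFun heig i'
  simp only [Matrix.mulVec, dotProduct, Pi.smul_apply, smul_eq_mul] at h
  have h2 := congrArg (starRingEnd ℂ) h
  simp only [map_sum, _root_.map_mul, Complex.conj_ofReal] at h2
  rw [← h2]
  refine Finset.sum_congr rfl fun i _ => ?_
  have : starRingEnd ℂ (HC i' i) = HC i i' := by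
    have := congrFun (congrFun hHC i) i'
    simpa [Matrix.conjTranspose_apply] using this
  rw [this, mul_comm]

lemma aux_comp {dC dS : ℕ} (HC : Matrix (Fin dC) (Fin dC) ℂ) (hHC : HC.IsHermitian)
    (HS : Matrix (Fin dS) (Fin dS) ℂ)
    (v : Fin dC → Fin dC → ℂ) (ε : Fin dC → ℝ)
    (heig : ∀ j, HC *ᵥ v j = (ε j : ℂ) • v j)
    (x : Fin dC × Fin dS → ℂ)
    (hx : (HC ⊗ₖ (1 : Matrix (Fin dS) (Fin dS) ℂ) +
      (1 : Matrix (Fin dC) (Fin dC) ℂ) ⊗ₖ HS) *ᵥ x = 0) (j : Fin dC) (s : Fin dS) :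
    ∑ s', HS s s' * (∑ i, starRingEnd ℂ (v j i) * x (i, s')) =
      (-(ε j) : ℂ) * ∑ i, starRingEnd ℂ (v j i) * x (i, s) := by
  calc ∑ s', HS s s' * (∑ i, starRingEnd ℂ (v j i) * x (i, s'))
      = ∑ i, starRingEnd ℂ (v j i) * ∑ s', HS s s' * x (i, s') := by
        simp only [Finset.mul_sum]
        rw [Finset.sum_comm]
        refine Finset.sum_congr rfl fun i _ => Finset.sum_congr rfl fun s' _ => by ring
    _ = ∑ i, starRingEnd ℂ (v j i) * (-(∑ i', HC i i' * x (i', s))) := by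
        refine Finset.sum_congr rfl fun i _ => ?_
        have := aux_entry HC HS x hx i s
        rw [show ∑ s', HS s s' * x (i, s') = -(∑ i', HC i i' * x (i', s)) by linear_combination this]
    _ = -∑ i', (∑ i, starRingEnd ℂ (v j i) * HC i i') * x (i', s) := by
        simp only [mul_neg, ← Finset.sum_neg_distrib, Finset.mul_sum, Finset.sum_mul]
        rw [Finset.sum_comm]
        refine Finset.sum_congr rfl fun i _ => Finset.sum_congr rfl fun i' _ => by ring
    _ = (-(ε j) : ℂ) * ∑ i, starRingEnd ℂ (v j i) * x (i, s) := by
        simp only [aux_row HC hHC v ε j (heig j), Finset.mul_sum]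
        rw [← Finset.sum_neg_distrib]
        refine Finset.sum_congr rfl fun i _ => by ring

lemma aux_ortho {dS : ℕ} (HS : Matrix (Fin dS) (Fin dS) ℂ) (hHS : HS.IsHermitian)
    (x y : Fin dS → ℂ) (α β : ℝ) (hα : HS *ᵥ x = (α : ℂ) • x) (hβ : HS *ᵥ y = (β : ℂ) • y)
    (hne : α ≠ β) : star x ⬝ᵥ y = 0 := by
  have h1 : star x ⬝ᵥ (HS *ᵥ y) = (β : ℂ) * (star x ⬝ᵥ y) := by
    rw [hβ, dotProduct_smul, smul_eq_mul]
  have h2 : star x ⬝ᵥ (HS *ᵥ y) = (α : ℂ) * (star x ⬝ᵥ y) := by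
    rw [Matrix.dotProduct_mulVec]
    have hv : star x ᵥ* HS = (α : ℂ) • star x := by
      conv_lhs => rw [← hHS]
      rw [← Matrix.star_mulVec, hα]
      ext s
      simp [Complex.conj_ofReal]
    rw [hv, smul_dotProduct, smul_eq_mul]
  have h3 : ((α : ℂ) - β) * (star x ⬝ᵥ y) = 0 := by linear_combination h1 - h2
  rcases mul_eq_zero.mp h3 with h | h
  · exfalso; apply hne
    have := sub_eq_zero.mp h
    exact_mod_cast this
  · exact h

/-- Lemma 10 of the paper (compact case `G = U(1)`): for physical states `ψ, χ ∈ ker C_H`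
of a constraint generating a `t̃_max = N·t_max`-periodic projective representation, the
conditional inner product `⟨χ|(|τ⟩⟨τ| ⊗ I_S)|ψ⟩` equals the ordinary inner product
`⟨χ|ψ⟩`, independently of the clock reading `τ`. -/
theorem stmt_17 (dC dS : ℕ) (hdC : 0 < dC) (tmax : ℝ) (ht : 0 < tmax) (φ0 : ℝ)
    (hφ0 : φ0 ∈ Set.Ico 0 (2 * π))
    (HC : Matrix (Fin dC) (Fin dC) ℂ) (hHC : HC.IsHermitian)
    (HS : Matrix (Fin dS) (Fin dS) ℂ) (hHS : HS.IsHermitian)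
    (v : Fin dC → Fin dC → ℂ)
    (hv : ∀ j k, star (v j) ⬝ᵥ v k = if j = k then (1 : ℂ) else 0)
    (ε : Fin dC → ℝ) (hsimple : Function.Injective ε)
    (heig : ∀ j, HC *ᵥ v j = (ε j : ℂ) • v j)
    (hlat : ∀ j, ∃ n : ℤ, ε j = (2 * π / tmax) * ((n : ℝ) + φ0 / (2 * π)))
    (g : Fin dC → ℝ)
    (N : ℕ) (hN : 0 < N)
    (hper : ∃ θ : ℝ, UCS HC HS ((N : ℝ) * tmax) =
      Complex.exp (Complex.I * (θ : ℂ)) • (1 : Matrix (Fin dC × Fin dS) (Fin dC × Fin dS) ℂ))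
    (ψ χ : Fin dC × Fin dS → ℂ)
    (hψ : (HC ⊗ₖ (1 : Matrix (Fin dS) (Fin dS) ℂ) +
      (1 : Matrix (Fin dC) (Fin dC) ℂ) ⊗ₖ HS) *ᵥ ψ = 0)
    (hχ : (HC ⊗ₖ (1 : Matrix (Fin dS) (Fin dS) ℂ) +
      (1 : Matrix (Fin dC) (Fin dC) ℂ) ⊗ₖ HS) *ᵥ χ = 0) :
    ∀ τ : ℝ,
      star χ ⬝ᵥ (((ketbraM (clockVec v ε g τ)) ⊗ₖ (1 : Matrix (Fin dS) (Fin dS) ℂ)) *ᵥ ψ) =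
        star χ ⬝ᵥ ψ := by
  intro τ
  classical
  set a : Fin dC → ℂ := fun j =>
    Complex.exp (Complex.I * (g j : ℂ)) * Complex.exp (-Complex.I * (ε j : ℂ) * (τ : ℂ)) with ha
  set u : Fin dC → ℂ := clockVec v ε g τ with hu
  have huv : ∀ i, u i = ∑ j, a j * v j i := fun i => rfl
  set c : Fin dC → Fin dS → ℂ := fun j s => ∑ i, starRingEnd ℂ (v j i) * ψ (i, s) with hc
  set b : Fin dC → Fin dS → ℂ := fun j s => ∑ i, starRingEnd ℂ (v j i) * χ (i, s) with hb
  have hVV := aux_complete v hv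
  -- |a j|² = 1
  have haa : ∀ j, a j * starRingEnd ℂ (a j) = 1 := by
    intro j
    simp only [ha, ← Complex.exp_conj, ← Complex.exp_add]
    have hz : Complex.I * (g j : ℂ) + -Complex.I * (ε j : ℂ) * (τ : ℂ) +
        starRingEnd ℂ (Complex.I * (g j : ℂ) + -Complex.I * (ε j : ℂ) * (τ : ℂ)) = 0 := by
      simp only [map_add, _root_.map_mul, map_neg, Complex.conj_I, Complex.conj_ofReal]
      ring
    rw [hz, Complex.exp_zero]
  -- eigenvector property of the components
  have hcψ : ∀ j, HS *ᵥ c j = ((-(ε j) : ℝ) : ℂ) • c j := by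
    intro j; funext s
    have := aux_comp HC hHC HS v ε heig ψ hψ j s
    simpa [Matrix.mulVec, dotProduct, hc, Pi.smul_apply, smul_eq_mul] using this
  have hbχ : ∀ j, HS *ᵥ b j = ((-(ε j) : ℝ) : ℂ) • b j := by
    intro j; funext s
    have := aux_comp HC hHC HS v ε heig χ hχ j s
    simpa [Matrix.mulVec, dotProduct, hb, Pi.smul_apply, smul_eq_mul] using this
  -- orthogonality of distinct components
  have hjk : ∀ j k, j ≠ k → ∑ s, starRingEnd ℂ (b j s) * c k s = 0 := by
    intro j k hne
    have h := aux_ortho HS hHS (b j) (c k) (-(ε j)) (-(ε k)) (hbχ j) (hcψ k)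
      (fun hcontra => hne (hsimple (by linarith [neg_injective hcontra])))
    simpa [dotProduct, Pi.star_apply, Complex.star_def] using h
  -- per-slice expansions
  have hA : ∀ s, ∑ i, starRingEnd ℂ (χ (i, s)) * u i = ∑ j, a j * starRingEnd ℂ (b j s) := by
    intro s
    simp only [huv, Finset.mul_sum]
    rw [Finset.sum_comm]
    refine Finset.sum_congr rfl fun j _ => ?_
    have : starRingEnd ℂ (b j s) = ∑ i, v j i * starRingEnd ℂ (χ (i, s)) := by
      simp [hb, map_sum, _root_.map_mul]
    rw [this, Finset.mul_sum]
    exact Finset.sum_congr rfl fun i _ => by ring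
  have hB : ∀ s, ∑ i, starRingEnd ℂ (u i) * ψ (i, s) = ∑ k, starRingEnd ℂ (a k) * c k s := by
    intro s
    have hcu : ∀ i, starRingEnd ℂ (u i) = ∑ k, starRingEnd ℂ (a k) * starRingEnd ℂ (v k i) := by
      intro i
      rw [huv i]
      simp [map_sum, _root_.map_mul]
    simp only [hcu, Finset.sum_mul]
    rw [Finset.sum_comm]
    refine Finset.sum_congr rfl fun k _ => ?_
    simp only [hc, Finset.mul_sum]
    exact Finset.sum_congr rfl fun i _ => by ring
  -- the right-hand side in components
  have hRHS : star χ ⬝ᵥ ψ = ∑ j, ∑ s, starRingEnd ℂ (b j s) * c j s := by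
    have : star χ ⬝ᵥ ψ = ∑ s, ∑ k, starRingEnd ℂ (b k s) * c k s := by
      rw [show star χ ⬝ᵥ ψ = ∑ i, ∑ s, starRingEnd ℂ (χ (i, s)) * ψ (i, s) by
        simp [dotProduct, Fintype.sum_prod_type, Pi.star_apply, Complex.star_def]]
      rw [Finset.sum_comm]
      refine Finset.sum_congr rfl fun s _ => ?_
      have hexp : ∀ i, ψ (i, s) = ∑ k, v k i * c k s := fun i => aux_expand v hVV ψ i s
      calc ∑ i, starRingEnd ℂ (χ (i, s)) * ψ (i, s)
          = ∑ i, ∑ k, starRingEnd ℂ (χ (i, s)) * (v k i * c k s) := by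
            refine Finset.sum_congr rfl fun i _ => ?_
            rw [hexp i, Finset.mul_sum]
        _ = ∑ k, ∑ i, starRingEnd ℂ (χ (i, s)) * (v k i * c k s) := Finset.sum_comm
        _ = ∑ k, starRingEnd ℂ (b k s) * c k s := by
            refine Finset.sum_congr rfl fun k _ => ?_
            have : starRingEnd ℂ (b k s) = ∑ i, v k i * starRingEnd ℂ (χ (i, s)) := by
              simp [hb, map_sum, _root_.map_mul]
            rw [this, Finset.sum_mul]
            exact Finset.sum_congr rfl fun i _ => by ring
    rw [this, Finset.sum_comm]
  -- main computation
  calc star χ ⬝ᵥ ((ketbraM u ⊗ₖ (1 : Matrix (Fin dS) (Fin dS) ℂ)) *ᵥ ψ)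
      = ∑ s, (∑ i, starRingEnd ℂ (χ (i, s)) * u i) * (∑ i', starRingEnd ℂ (u i') * ψ (i', s)) := by
        simp only [dotProduct, Matrix.mulVec, ketbraM, Matrix.vecMulVec_apply,
          Matrix.kroneckerMap_apply, Matrix.one_apply, Fintype.sum_prod_type, Pi.star_apply,
          Complex.star_def, mul_ite, mul_zero, mul_one, ite_mul, zero_mul,
          Finset.sum_ite_irrel, Finset.sum_const_zero, Finset.sum_ite_eq, Finset.sum_ite_eq',
          Finset.mem_univ, if_true]
        rw [Finset.sum_comm]
        refine Finset.sum_congr rfl fun s _ => ?_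
        rw [Finset.sum_mul]
        refine Finset.sum_congr rfl fun i _ => ?_
        rw [Finset.mul_sum, Finset.mul_sum]
        refine Finset.sum_congr rfl fun i' _ => by ring
    _ = ∑ s, (∑ j, a j * starRingEnd ℂ (b j s)) * (∑ k, starRingEnd ℂ (a k) * c k s) := by
        exact Finset.sum_congr rfl fun s _ => by rw [hA s, hB s]
    _ = ∑ j, ∑ k, (a j * starRingEnd ℂ (a k)) * ∑ s, starRingEnd ℂ (b j s) * c k s := by
        calc ∑ s, (∑ j, a j * starRingEnd ℂ (b j s)) * (∑ k, starRingEnd ℂ (a k) * c k s)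
            = ∑ s, ∑ j, ∑ k, (a j * starRingEnd ℂ (b j s)) * (starRingEnd ℂ (a k) * c k s) := by
              refine Finset.sum_congr rfl fun s _ => ?_
              rw [Finset.sum_mul_sum]
          _ = ∑ j, ∑ s, ∑ k, (a j * starRingEnd ℂ (b j s)) * (starRingEnd ℂ (a k) * c k s) :=
              Finset.sum_comm
          _ = ∑ j, ∑ k, ∑ s, (a j * starRingEnd ℂ (b j s)) * (starRingEnd ℂ (a k) * c k s) :=
              Finset.sum_congr rfl fun j _ => Finset.sum_comm
          _ = ∑ j, ∑ k, (a j * starRingEnd ℂ (a k)) * ∑ s, starRingEnd ℂ (b j s) * c k s := by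
              refine Finset.sum_congr rfl fun j _ => Finset.sum_congr rfl fun k _ => ?_
              rw [Finset.mul_sum]
              refine Finset.sum_congr rfl fun s _ => by ring
    _ = ∑ j, ∑ s, starRingEnd ℂ (b j s) * c j s := by
        refine Finset.sum_congr rfl fun j _ => ?_
        rw [Finset.sum_eq_single j]
        · rw [haa j, one_mul]
        · intro k _ hk
          rw [hjk j k (Ne.symm hk), mul_zero]
        · intro h; exact absurd (Finset.mem_univ j) h
    _ = star χ ⬝ᵥ ψ := hRHS.symm
end

section
/- Define the Page-Wootters reduction map R_S(τ) = ⟨τ| ⊗ I_S : ℋ_phys → ℋ_S and the inverse map R_S^{-1}(τ) = (1/t_max)·∫₀^{t_max} |φ⟩ ⊗ U_S(φ−τ) dφ : ℋ_S → ℋ_C ⊗ ℋ_S. Then for every |ψ⟩ ∈ ker(C_H): R_S^{-1}(τ)·R_S(τ)|ψ⟩ = |ψ⟩, i.e. the reduction is invertible on the physical subspace. Moreover R_S(τ)|ψ⟩ solves the Schrödinger equation: i·d/dτ (R_S(τ)|ψ⟩) = H_S·(R_S(τ)|ψ⟩). -/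
open Real Matrix Kronecker NormedSpace

/-- The Page-Wootters reduction `R_S(τ)|ψ⟩ = (⟨τ| ⊗ I_S)|ψ⟩`. -/
noncomputable def redState {dC dS : ℕ} (clk : ℝ → Fin dC → ℂ)
    (ψ : Fin dC × Fin dS → ℂ) (τ : ℝ) : Fin dS → ℂ :=
  fun j => star (clk τ) ⬝ᵥ fun i => ψ (i, j)

section Aux

attribute [local instance] Matrix.linftyOpNormedAddCommGroup Matrix.linftyOpNormedRing
  Matrix.linftyOpNormedAlgebra

open Nat in
lemma exp_mulVec_eigen {n : ℕ} (A : Matrix (Fin n) (Fin n) ℂ) (x : Fin n → ℂ) (μ : ℂ)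
    (h : A *ᵥ x = μ • x) : NormedSpace.exp A *ᵥ x = Complex.exp μ • x := by
  have hpow : ∀ k : ℕ, A ^ k *ᵥ x = μ ^ k • x := by
    intro k
    induction k with
    | zero => simp
    | succ k ih =>
      rw [pow_succ, ← Matrix.mulVec_mulVec, h, Matrix.mulVec_smul, ih, smul_smul, pow_succ]
      ring_nf
  let L : Matrix (Fin n) (Fin n) ℂ →ₗ[ℂ] (Fin n → ℂ) :=
    { toFun := fun M => M *ᵥ x
      map_add' := fun M N => Matrix.add_mulVec M N x
      map_smul' := fun c M => Matrix.smul_mulVec c M x }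
  have hs : Summable fun k : ℕ => (k !⁻¹ : ℂ) • A ^ k := NormedSpace.expSeries_summable' A
  have hμ : Summable fun k : ℕ => (k !⁻¹ : ℂ) • μ ^ k := NormedSpace.expSeries_summable' μ
  let Lc := LinearMap.toContinuousLinearMap L
  have hLe : ∀ M, Lc M = M *ᵥ x := fun M => by
    rw [show ⇑Lc = ⇑L from LinearMap.coe_toContinuousLinearMap' L]; rfl
  calc NormedSpace.exp A *ᵥ x = Lc (∑' k : ℕ, (k !⁻¹ : ℂ) • A ^ k) := by
        rw [hLe, NormedSpace.exp_eq_tsum ℂ]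
    _ = ∑' k : ℕ, Lc ((k !⁻¹ : ℂ) • A ^ k) := Lc.map_tsum hs
    _ = ∑' k : ℕ, ((k !⁻¹ : ℂ) • μ ^ k) • x := by
        congr 1; funext k
        rw [hLe, Matrix.smul_mulVec, hpow, smul_smul, smul_eq_mul]
    _ = (∑' k : ℕ, (k !⁻¹ : ℂ) • μ ^ k) • x := hμ.tsum_smul_const x
    _ = Complex.exp μ • x := by rw [Complex.exp_eq_exp_ℂ, NormedSpace.exp_eq_tsum ℂ]

end Aux

/-- Lemma 8 and Eq. (schrod) of the paper: for physical states `ψ ∈ ker C_H`, the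
Page-Wootters reduction `R_S(τ) = ⟨τ| ⊗ I_S` is inverted by
`R_S^{-1}(τ) = (1/t_max)·∫₀^{t_max} |φ⟩ ⊗ U_S(φ−τ) dφ`, and the reduced state satisfies
the Schrödinger equation `i·d/dτ(R_S(τ)|ψ⟩) = H_S·(R_S(τ)|ψ⟩)`. -/
theorem stmt_18 (dC dS : ℕ) (hdC : 0 < dC) (tmax : ℝ) (ht : 0 < tmax) (φ0 : ℝ)
    (hφ0 : φ0 ∈ Set.Ico 0 (2 * π))
    (HC : Matrix (Fin dC) (Fin dC) ℂ) (hHC : HC.IsHermitian)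
    (HS : Matrix (Fin dS) (Fin dS) ℂ) (hHS : HS.IsHermitian)
    (v : Fin dC → Fin dC → ℂ)
    (hv : ∀ j k, star (v j) ⬝ᵥ v k = if j = k then (1 : ℂ) else 0)
    (ε : Fin dC → ℝ) (hsimple : Function.Injective ε)
    (heig : ∀ j, HC *ᵥ v j = (ε j : ℂ) • v j)
    (hlat : ∀ j, ∃ n : ℤ, ε j = (2 * π / tmax) * ((n : ℝ) + φ0 / (2 * π)))
    (g : Fin dC → ℝ)
    (ψ : Fin dC × Fin dS → ℂ)
    (hψ : (HC ⊗ₖ (1 : Matrix (Fin dS) (Fin dS) ℂ) +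
      (1 : Matrix (Fin dC) (Fin dC) ℂ) ⊗ₖ HS) *ᵥ ψ = 0) :
    (∀ τ : ℝ,
      (tmax : ℂ)⁻¹ • (∫ φ in (0:ℝ)..tmax,
        fun p : Fin dC × Fin dS =>
          clockVec v ε g φ p.1 *
            ((US HS (φ - τ)) *ᵥ redState (fun t => clockVec v ε g t) ψ τ) p.2) = ψ) ∧
    (∀ τ : ℝ,
      HasDerivAt (fun t => redState (fun u => clockVec v ε g u) ψ t)
        ((-Complex.I) • (HS *ᵥ redState (fun u => clockVec v ε g u) ψ τ)) τ) := by
  classical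
  have htC : (tmax : ℂ) ≠ 0 := Complex.ofReal_ne_zero.mpr (ne_of_gt ht)
  set a : Fin dC → Fin dS → ℂ := fun k j => ∑ i, (starRingEnd ℂ) (v k i) * ψ (i, j) with ha
  -- the constraint, componentwise
  have hconstr : ∀ i j, (∑ i', HC i i' * ψ (i', j)) + (∑ j', HS j j' * ψ (i, j')) = 0 := by
    intro i j
    have h0 := congrFun hψ (i, j)
    simp only [Matrix.mulVec, dotProduct, Matrix.add_apply, Matrix.kroneckerMap_apply,
      Pi.zero_apply, Fintype.sum_prod_type, Matrix.one_apply, add_mul, ite_mul, mul_ite,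
      one_mul, zero_mul, mul_zero, Finset.sum_add_distrib, Finset.sum_ite_eq,
      Finset.sum_ite_eq', Finset.mem_univ, if_true, mul_one, Finset.sum_ite_irrel,
      Finset.sum_const_zero] at h0
    exact h0
  -- rows of HC against conjugated eigenvectors
  have hrow : ∀ k i', (∑ i, (starRingEnd ℂ) (v k i) * HC i i')
      = (ε k : ℂ) * (starRingEnd ℂ) (v k i') := by
    intro k i'
    have hH : ∀ i, HC i i' = (starRingEnd ℂ) (HC i' i) := fun i => (hHC.apply i i').symm
    calc ∑ i, (starRingEnd ℂ) (v k i) * HC i i'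
        = (starRingEnd ℂ) (∑ i, HC i' i * v k i) := by
          rw [_root_.map_sum]
          refine Finset.sum_congr rfl fun i _ => ?_
          rw [_root_.map_mul, hH i, mul_comm]
      _ = (starRingEnd ℂ) ((HC *ᵥ v k) i') := by
          simp [Matrix.mulVec, dotProduct]
      _ = (ε k : ℂ) * (starRingEnd ℂ) (v k i') := by
          rw [heig k]
          simp [Complex.conj_ofReal]
  -- auxiliary: conj(v k) against HC ψ columns
  have hX : ∀ k j, ∑ i, (starRingEnd ℂ) (v k i) * (∑ i', HC i i' * ψ (i', j))
      = (ε k : ℂ) * a k j := by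
    intro k j
    calc ∑ i, (starRingEnd ℂ) (v k i) * (∑ i', HC i i' * ψ (i', j))
        = ∑ i, ∑ i', ((starRingEnd ℂ) (v k i) * HC i i') * ψ (i', j) := by
          refine Finset.sum_congr rfl fun i _ => ?_
          rw [Finset.mul_sum]
          exact Finset.sum_congr rfl fun i' _ => by ring
      _ = ∑ i', (∑ i, (starRingEnd ℂ) (v k i) * HC i i') * ψ (i', j) := by
          rw [Finset.sum_comm]
          exact Finset.sum_congr rfl fun i' _ => (Finset.sum_mul _ _ _).symm
      _ = ∑ i', ((ε k : ℂ) * (starRingEnd ℂ) (v k i')) * ψ (i', j) :=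
          Finset.sum_congr rfl fun i' _ => by rw [hrow]
      _ = (ε k : ℂ) * a k j := by
          rw [ha, Finset.mul_sum]
          exact Finset.sum_congr rfl fun i' _ => by ring
  -- HS acts on a k with eigenvalue -ε k (entrywise)
  have hHSa : ∀ k j, (∑ j', HS j j' * a k j') = -(ε k : ℂ) * a k j := by
    intro k j
    calc ∑ j', HS j j' * a k j'
        = ∑ j', ∑ i, (starRingEnd ℂ) (v k i) * (HS j j' * ψ (i, j')) := by
          refine Finset.sum_congr rfl fun j' _ => ?_
          rw [ha, Finset.mul_sum]
          exact Finset.sum_congr rfl fun i _ => by ring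
      _ = ∑ i, (starRingEnd ℂ) (v k i) * (∑ j', HS j j' * ψ (i, j')) := by
          rw [Finset.sum_comm]
          exact Finset.sum_congr rfl fun i _ => (Finset.mul_sum _ _ _).symm
      _ = -∑ i, (starRingEnd ℂ) (v k i) * (∑ i', HC i i' * ψ (i', j)) := by
          rw [← Finset.sum_neg_distrib]
          refine Finset.sum_congr rfl fun i _ => ?_
          have h2 : (∑ j', HS j j' * ψ (i, j')) = -(∑ i', HC i i' * ψ (i', j)) := by
            linear_combination hconstr i j
          rw [h2, mul_neg]
      _ = -(ε k : ℂ) * a k j := by rw [hX k j]; ring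
  -- HS acts on a k with eigenvalue -ε k (matrix-level)
  have hHSa' : ∀ k, HS *ᵥ a k = (-(ε k : ℂ)) • a k := by
    intro k
    funext j
    simp only [Matrix.mulVec, dotProduct, Pi.smul_apply, smul_eq_mul]
    exact hHSa k j
  -- completeness of the eigenbasis
  have hcompl : ∀ i i', (∑ k, v k i * (starRingEnd ℂ) (v k i'))
      = if i = i' then (1 : ℂ) else 0 := by
    intro i i'
    have hM : (Matrix.of v) * (Matrix.of v)ᴴ = 1 := by
      ext j k
      have h1 := hv k j
      simp only [dotProduct, Pi.star_apply] at h1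
      calc ((Matrix.of v) * (Matrix.of v)ᴴ) j k
          = ∑ i, v j i * (starRingEnd ℂ) (v k i) := by
            simp [Matrix.mul_apply, Matrix.conjTranspose_apply, Matrix.of_apply,
              Complex.star_def]
        _ = ∑ i, star (v k i) * v j i :=
            Finset.sum_congr rfl fun i _ => by rw [Complex.star_def, mul_comm]
        _ = if k = j then 1 else 0 := h1
        _ = (1 : Matrix (Fin dC) (Fin dC) ℂ) j k := by
            rw [Matrix.one_apply]
            simp [eq_comm]
    have hM' : (Matrix.of v)ᴴ * (Matrix.of v) = 1 := mul_eq_one_comm.mp hM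
    have h3 := congrFun (congrFun hM' i) i'
    simp only [Matrix.mul_apply, Matrix.conjTranspose_apply, Matrix.of_apply,
      Matrix.one_apply, Complex.star_def] at h3
    calc ∑ k, v k i * (starRingEnd ℂ) (v k i')
        = (starRingEnd ℂ) (∑ k, (starRingEnd ℂ) (v k i) * v k i') := by
          rw [_root_.map_sum]
          exact Finset.sum_congr rfl fun k _ => by
            rw [_root_.map_mul, Complex.conj_conj, mul_comm]
      _ = (starRingEnd ℂ) (if i = i' then 1 else 0) := by rw [h3]
      _ = if i = i' then (1 : ℂ) else 0 := by
          by_cases h : i = i' <;> simp [h]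
  -- expansion of ψ in the eigenbasis
  have hpsi : ∀ p : Fin dC × Fin dS, ψ p = ∑ k, v k p.1 * a k p.2 := by
    rintro ⟨i, j⟩
    calc ψ (i, j) = ∑ i', (if i = i' then (1:ℂ) else 0) * ψ (i', j) := by
          simp [ite_mul, Finset.sum_ite_eq]
      _ = ∑ i', (∑ k, v k i * (starRingEnd ℂ) (v k i')) * ψ (i', j) :=
          Finset.sum_congr rfl fun i' _ => by rw [hcompl]
      _ = ∑ i', ∑ k, v k i * ((starRingEnd ℂ) (v k i') * ψ (i', j)) := by
          refine Finset.sum_congr rfl fun i' _ => ?_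
          rw [Finset.sum_mul]
          exact Finset.sum_congr rfl fun k _ => by ring
      _ = ∑ k, v k i * a k j := by
          rw [Finset.sum_comm]
          exact Finset.sum_congr rfl fun k _ => by
            rw [ha, ← Finset.mul_sum]
  -- conjugate clock state expansion
  have hclk : ∀ (t : ℝ) (i : Fin dC), (starRingEnd ℂ) (clockVec v ε g t i)
      = ∑ k, Complex.exp (Complex.I * ((ε k : ℂ) * (t : ℂ) - (g k : ℂ))) *
          (starRingEnd ℂ) (v k i) := by
    intro t i
    rw [clockVec, _root_.map_sum]
    refine Finset.sum_congr rfl fun k _ => ?_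
    rw [_root_.map_mul, _root_.map_mul, ← Complex.exp_conj, ← Complex.exp_conj]
    simp only [_root_.map_mul, map_neg, Complex.conj_I, Complex.conj_ofReal]
    rw [← Complex.exp_add]
    congr 2
    ring
  -- reduced state in the eigenbasis
  have hred : ∀ (τ : ℝ) (j : Fin dS), redState (fun t => clockVec v ε g t) ψ τ j
      = ∑ k, Complex.exp (Complex.I * ((ε k : ℂ) * (τ : ℂ) - (g k : ℂ))) * a k j := by
    intro τ j
    calc redState (fun t => clockVec v ε g t) ψ τ j
        = ∑ i, (starRingEnd ℂ) (clockVec v ε g τ i) * ψ (i, j) := by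
          simp [redState, dotProduct, Pi.star_apply, Complex.star_def]
      _ = ∑ i, ∑ k, Complex.exp (Complex.I * ((ε k : ℂ) * (τ : ℂ) - (g k : ℂ))) *
            ((starRingEnd ℂ) (v k i) * ψ (i, j)) := by
          refine Finset.sum_congr rfl fun i _ => ?_
          rw [hclk, Finset.sum_mul]
          exact Finset.sum_congr rfl fun k _ => by ring
      _ = ∑ k, Complex.exp (Complex.I * ((ε k : ℂ) * (τ : ℂ) - (g k : ℂ))) * a k j := by
          rw [Finset.sum_comm]
          exact Finset.sum_congr rfl fun k _ => by rw [ha, ← Finset.mul_sum]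
  -- the reduced state as a sum of vectors
  have hredv : ∀ τ : ℝ, redState (fun t => clockVec v ε g t) ψ τ
      = ∑ k, Complex.exp (Complex.I * ((ε k : ℂ) * (τ : ℂ) - (g k : ℂ))) • a k := by
    intro τ
    funext j
    rw [hred]
    simp [Finset.sum_apply]
  -- US acting on a k
  have hUS : ∀ (t : ℝ) (k : Fin dC), US HS t *ᵥ a k
      = Complex.exp (Complex.I * ((ε k : ℂ) * (t : ℂ))) • a k := by
    intro t k
    have h1 : ((-(t : ℂ) * Complex.I) • HS) *ᵥ a k
        = ((-(t : ℂ) * Complex.I) * (-(ε k : ℂ))) • a k := by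
      rw [Matrix.smul_mulVec, hHSa' k, smul_smul]
    rw [US, exp_mulVec_eigen _ _ _ h1]
    congr 2
    ring
  refine ⟨fun τ => ?_, fun τ => ?_⟩
  · -- Part 1: inversion
    have hUSred : ∀ φ : ℝ, (US HS (φ - τ)) *ᵥ redState (fun t => clockVec v ε g t) ψ τ
        = ∑ k, (Complex.exp (Complex.I * ((ε k : ℂ) * ((φ : ℂ) - (τ : ℂ)))) *
            Complex.exp (Complex.I * ((ε k : ℂ) * (τ : ℂ) - (g k : ℂ)))) • a k := by
      intro φ
      rw [hredv τ]
      rw [show ((φ : ℝ) - τ : ℝ) = φ - τ from rfl]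
      calc US HS (φ - τ) *ᵥ ∑ k, Complex.exp (Complex.I * ((ε k : ℂ) * (τ : ℂ) - (g k : ℂ))) • a k
          = ∑ k, Complex.exp (Complex.I * ((ε k : ℂ) * (τ : ℂ) - (g k : ℂ))) •
              (US HS (φ - τ) *ᵥ a k) := by
            simp only [← Matrix.mulVecLin_apply, _root_.map_sum, LinearMap.map_smul]
        _ = ∑ k, (Complex.exp (Complex.I * ((ε k : ℂ) * ((φ : ℂ) - (τ : ℂ)))) *
              Complex.exp (Complex.I * ((ε k : ℂ) * (τ : ℂ) - (g k : ℂ)))) • a k := by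
            refine Finset.sum_congr rfl fun k _ => ?_
            rw [hUS (φ - τ) k, smul_smul, mul_comm]
            congr 3
            push_cast
            ring
    -- integrand as a finite sum of scalar-valued functions times constant vectors
    have hInt : ∀ φ : ℝ, (fun p : Fin dC × Fin dS =>
          clockVec v ε g φ p.1 *
            ((US HS (φ - τ)) *ᵥ redState (fun t => clockVec v ε g t) ψ τ) p.2)
        = ∑ m, ∑ k,
            (Complex.exp (Complex.I * (g m : ℂ)) *
              Complex.exp (-Complex.I * (ε m : ℂ) * (φ : ℂ)) *
              Complex.exp (Complex.I * ((ε k : ℂ) * ((φ : ℂ) - (τ : ℂ))))) •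
            (fun p : Fin dC × Fin dS => v m p.1 *
              (Complex.exp (Complex.I * ((ε k : ℂ) * (τ : ℂ) - (g k : ℂ))) * a k p.2)) := by
      intro φ
      funext p
      rw [hUSred φ]
      simp only [clockVec, Finset.sum_apply, Pi.smul_apply, smul_eq_mul]
      rw [Finset.sum_mul_sum]
      exact Finset.sum_congr rfl fun m _ => Finset.sum_congr rfl fun k _ => by ring
    have hcont : ∀ m k : Fin dC, Continuous (fun φ : ℝ =>
        Complex.exp (Complex.I * (g m : ℂ)) *
          Complex.exp (-Complex.I * (ε m : ℂ) * (φ : ℂ)) *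
          Complex.exp (Complex.I * ((ε k : ℂ) * ((φ : ℂ) - (τ : ℂ))))) := by
      intro m k
      fun_prop
    have key : (∫ φ in (0:ℝ)..tmax,
          fun p : Fin dC × Fin dS =>
            clockVec v ε g φ p.1 *
              ((US HS (φ - τ)) *ᵥ redState (fun t => clockVec v ε g t) ψ τ) p.2)
        = ∑ m, ∑ k,
            (∫ φ in (0:ℝ)..tmax,
              Complex.exp (Complex.I * (g m : ℂ)) *
                Complex.exp (-Complex.I * (ε m : ℂ) * (φ : ℂ)) *
                Complex.exp (Complex.I * ((ε k : ℂ) * ((φ : ℂ) - (τ : ℂ))))) •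
            (fun p : Fin dC × Fin dS => v m p.1 *
              (Complex.exp (Complex.I * ((ε k : ℂ) * (τ : ℂ) - (g k : ℂ))) * a k p.2)) := by
      rw [intervalIntegral.integral_congr (g := fun φ : ℝ => ∑ m, ∑ k,
            (Complex.exp (Complex.I * (g m : ℂ)) *
              Complex.exp (-Complex.I * (ε m : ℂ) * (φ : ℂ)) *
              Complex.exp (Complex.I * ((ε k : ℂ) * ((φ : ℂ) - (τ : ℂ))))) •
            (fun p : Fin dC × Fin dS => v m p.1 *
              (Complex.exp (Complex.I * ((ε k : ℂ) * (τ : ℂ) - (g k : ℂ))) * a k p.2)))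
          (fun φ _ => hInt φ)]
      rw [intervalIntegral.integral_finset_sum]
      · refine Finset.sum_congr rfl fun m _ => ?_
        rw [intervalIntegral.integral_finset_sum]
        · exact Finset.sum_congr rfl fun k _ =>
            intervalIntegral.integral_smul_const _ _
        · intro k _
          exact (((hcont m k).smul continuous_const).intervalIntegrable _ _)
      · intro m _
        exact (continuous_finset_sum _ fun k _ =>
          (hcont m k).smul continuous_const).intervalIntegrable _ _
    -- scalar integrals
    have hSint : ∀ m k : Fin dC, (∫ φ in (0:ℝ)..tmax,
          Complex.exp (Complex.I * (g m : ℂ)) *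
            Complex.exp (-Complex.I * (ε m : ℂ) * (φ : ℂ)) *
            Complex.exp (Complex.I * ((ε k : ℂ) * ((φ : ℂ) - (τ : ℂ)))))
        = if m = k then (Complex.exp (Complex.I * (g m : ℂ)) *
            Complex.exp (-(Complex.I * ((ε k : ℂ) * (τ : ℂ))))) * (tmax : ℂ) else 0 := by
      intro m k
      have hre : ∀ φ : ℝ, Complex.exp (Complex.I * (g m : ℂ)) *
            Complex.exp (-Complex.I * (ε m : ℂ) * (φ : ℂ)) *
            Complex.exp (Complex.I * ((ε k : ℂ) * ((φ : ℂ) - (τ : ℂ))))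
          = (Complex.exp (Complex.I * (g m : ℂ)) *
              Complex.exp (-(Complex.I * ((ε k : ℂ) * (τ : ℂ))))) *
            Complex.exp ((Complex.I * ((ε k : ℂ) - (ε m : ℂ))) * (φ : ℂ)) := by
        intro φ
        simp only [← Complex.exp_add]
        congr 1
        ring
      rw [intervalIntegral.integral_congr (g := fun φ : ℝ =>
          (Complex.exp (Complex.I * (g m : ℂ)) *
            Complex.exp (-(Complex.I * ((ε k : ℂ) * (τ : ℂ))))) *
          Complex.exp ((Complex.I * ((ε k : ℂ) - (ε m : ℂ))) * (φ : ℂ)))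
          (fun φ _ => hre φ)]
      rw [intervalIntegral.integral_const_mul]
      by_cases hmk : m = k
      · subst hmk
        simp [Complex.exp_zero, sub_self, mul_zero, zero_mul]
      · have hkm : (ε k : ℂ) - (ε m : ℂ) ≠ 0 := by
          rw [sub_ne_zero]
          exact fun h => hmk ((hsimple (Complex.ofReal_inj.mp h)).symm)
        have hc : Complex.I * ((ε k : ℂ) - (ε m : ℂ)) ≠ 0 :=
          mul_ne_zero Complex.I_ne_zero hkm
        rw [integral_exp_mul_complex hc]
        obtain ⟨nk, hk⟩ := hlat k
        obtain ⟨nm, hm⟩ := hlat m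
        have hπ : (0:ℝ) < π := Real.pi_pos
        have hr : (ε k - ε m) * tmax = 2 * π * ((nk : ℝ) - (nm : ℝ)) := by
          rw [hk, hm]
          field_simp
          ring
        have harg : (Complex.I * ((ε k : ℂ) - (ε m : ℂ))) * (tmax : ℂ)
            = ((nk - nm : ℤ) : ℂ) * (2 * (π : ℂ) * Complex.I) := by
          calc (Complex.I * ((ε k : ℂ) - (ε m : ℂ))) * (tmax : ℂ)
              = Complex.I * (((ε k - ε m) * tmax : ℝ) : ℂ) := by push_cast; ring
            _ = Complex.I * ((2 * π * ((nk : ℝ) - (nm : ℝ)) : ℝ) : ℂ) := by rw [hr]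
            _ = ((nk - nm : ℤ) : ℂ) * (2 * (π : ℂ) * Complex.I) := by push_cast; ring
        rw [harg, Complex.exp_int_mul_two_pi_mul_I]
        simp [hmk]
    rw [key]
    simp only [hSint]
    simp only [ite_smul, zero_smul, Finset.sum_ite_eq, Finset.mem_univ, if_true]
    funext p
    simp only [Pi.smul_apply, Finset.smul_sum, Finset.sum_apply, smul_eq_mul]
    rw [hpsi p, Finset.mul_sum]
    refine Finset.sum_congr rfl fun m _ => ?_
    have h1 : Complex.exp (Complex.I * (g m : ℂ)) *
        Complex.exp (-(Complex.I * ((ε m : ℂ) * (τ : ℂ)))) *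
        Complex.exp (Complex.I * ((ε m : ℂ) * (τ : ℂ) - (g m : ℂ))) = 1 := by
      rw [← Complex.exp_add, ← Complex.exp_add, ← Complex.exp_zero]
      congr 1
      ring
    calc (tmax : ℂ)⁻¹ * ((Complex.exp (Complex.I * (g m : ℂ)) *
            Complex.exp (-(Complex.I * ((ε m : ℂ) * (τ : ℂ)))) * (tmax : ℂ)) *
          (v m p.1 * (Complex.exp (Complex.I * ((ε m : ℂ) * (τ : ℂ) - (g m : ℂ))) * a m p.2)))
        = ((tmax : ℂ)⁻¹ * (tmax : ℂ)) *
            (Complex.exp (Complex.I * (g m : ℂ)) *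
              Complex.exp (-(Complex.I * ((ε m : ℂ) * (τ : ℂ)))) *
              Complex.exp (Complex.I * ((ε m : ℂ) * (τ : ℂ) - (g m : ℂ)))) *
            (v m p.1 * a m p.2) := by ring
      _ = v m p.1 * a m p.2 := by rw [inv_mul_cancel₀ htC, h1, one_mul, one_mul]
  · -- Part 2: Schrödinger equation
    have hfun : (fun t => redState (fun u => clockVec v ε g u) ψ t)
        = fun (t : ℝ) (j : Fin dS) =>
            ∑ k, Complex.exp (Complex.I * ((ε k : ℂ) * (t : ℂ) - (g k : ℂ))) * a k j := by
      funext t j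
      exact hred t j
    have hD : (-Complex.I) • (HS *ᵥ redState (fun u => clockVec v ε g u) ψ τ)
        = fun j : Fin dS => ∑ k, (Complex.I * (ε k : ℂ) *
            Complex.exp (Complex.I * ((ε k : ℂ) * (τ : ℂ) - (g k : ℂ)))) * a k j := by
      funext j
      simp only [Pi.smul_apply, smul_eq_mul, Matrix.mulVec, dotProduct]
      calc (-Complex.I) * (∑ j', HS j j' * redState (fun u => clockVec v ε g u) ψ τ j')
          = (-Complex.I) * ∑ j', ∑ k,
              Complex.exp (Complex.I * ((ε k : ℂ) * (τ : ℂ) - (g k : ℂ))) *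
                (HS j j' * a k j') := by
            congr 1
            refine Finset.sum_congr rfl fun j' _ => ?_
            rw [hred, Finset.mul_sum]
            exact Finset.sum_congr rfl fun k _ => by ring
        _ = (-Complex.I) * ∑ k,
              Complex.exp (Complex.I * ((ε k : ℂ) * (τ : ℂ) - (g k : ℂ))) *
                (∑ j', HS j j' * a k j') := by
            rw [Finset.sum_comm]
            congr 1
            exact Finset.sum_congr rfl fun k _ => (Finset.mul_sum _ _ _).symm
        _ = (-Complex.I) * ∑ k,
              Complex.exp (Complex.I * ((ε k : ℂ) * (τ : ℂ) - (g k : ℂ))) *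
                (-(ε k : ℂ) * a k j) := by
            congr 1
            exact Finset.sum_congr rfl fun k _ => by rw [hHSa k j]
        _ = ∑ k, (Complex.I * (ε k : ℂ) *
              Complex.exp (Complex.I * ((ε k : ℂ) * (τ : ℂ) - (g k : ℂ)))) * a k j := by
            rw [Finset.mul_sum]
            exact Finset.sum_congr rfl fun k _ => by ring
    rw [hfun, hD]
    apply hasDerivAt_pi.mpr
    intro j
    apply HasDerivAt.fun_sum
    intro k _
    have hlin : HasDerivAt (fun t : ℝ => Complex.I * ((ε k : ℂ) * (t : ℂ) - (g k : ℂ)))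
        (Complex.I * (ε k : ℂ)) τ := by
      have hof : HasDerivAt (fun t : ℝ => (t : ℂ)) 1 τ := by
        simpa using (hasDerivAt_id τ).ofReal_comp
      simpa using (((hof.const_mul ((ε k : ℂ))).sub_const ((g k : ℂ))).const_mul Complex.I)
    have hexp := hlin.cexp
    have := hexp.mul_const (a k j)
    convert this using 1
    · rfl
    ring
end
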